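/- arXiv:0710.0949 — 7 statements merged into one kernel-verified Lean document; each statement's English description precedes it below -/
import Mathlib

section
/- Let m < n. For every pair (A,B) of m×n complex matrices and every ε > 0, there exist m×n complex matrices (A',B') with |A_{ij} − A'_{ij}| < ε and |B_{ij} − B'_{ij}| < ε for all i,j, such that the pair (A',B') is equivalent to the pair ([I_m 0], [0 I_m]), where [I_m 0] is the m×n matrix whose first m columns form the identity I_m and whose remaining columns are zero, and [0 I_m] is the m×n matrix whose last m columns form the identity I_m and whose first n−m columns are zero. -/
/-!
Write `P = [I 0]`, `Q = [0 I]` and `d = n - m`. If `U` is invertible, `(U A)_{k+d} = (U B)_k`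
for `k < m - d`, and the `n × n` matrix `S` whose first `m` rows are those of `U A` and whose
last `m` rows are those of `U B` is invertible, then `U A = P S` and `U B = Q S`, so `(A, B)` is
equivalent to `(P, Q)`.

The conditions on `U` form a linear system `L(A, B) U = 0`. At `(P, Q)` it is solved by `U = 1`,
and `L(P, Q)` has full row rank: a vector in the kernel of its transpose is a function of two
indices that is invariant under the diagonal shift `(k, j) ↦ (k + d, j + d)` and vanishes at one
end of every diagonal. Fix a right inverse `Z` of `L(P, Q)`; the adjugate formula
`det(L Z) • 1 - Z adj(L Z) L 1` then produces solutions `U` that depend polynomially on `(A, B)`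
and equal `1` at `(P, Q)`. Along the segment `t ↦ (P + t (A - P), Q + t (B - Q))` the product
`det U · det S` is thus a polynomial in `t` with value `1` at `t = 0`, so it does not vanish at
some `t` arbitrarily close to `1`.
-/

open Matrix

noncomputable section

/-- The `M × N` complex matrix obtained by placing the matrix `A` with its top-left corner
at (1-based) position `(ri+1, ci+1)` (i.e. with row offset `ri` and column offset `ci`),
with all other entries zero.  Block-diagonal direct sums of (possibly rectangular) matrices
are expressed as sums of such placements along the diagonal. -/
def place {M N m n : ℕ} (ri ci : ℕ) (A : Matrix (Fin m) (Fin n) ℂ) :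
    Matrix (Fin M) (Fin N) ℂ := fun i j =>
  if hi : ri ≤ (i : ℕ) ∧ (i : ℕ) < ri + m then
    if hj : ci ≤ (j : ℕ) ∧ (j : ℕ) < ci + n then
      A ⟨(i : ℕ) - ri, by omega⟩ ⟨(j : ℕ) - ci, by omega⟩
    else 0
  else 0

/-- The `r × (r-1)` matrix `F_r` with ones on the main diagonal and zeros elsewhere. -/
def MatF (r : ℕ) : Matrix (Fin r) (Fin (r - 1)) ℂ :=
  fun i j => if (i : ℕ) = (j : ℕ) then 1 else 0

/-- The `r × (r-1)` matrix `K_r` with ones on the subdiagonal and zeros elsewhere. -/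
def MatK (r : ℕ) : Matrix (Fin r) (Fin (r - 1)) ℂ :=
  fun i j => if (i : ℕ) = (j : ℕ) + 1 then 1 else 0

/-- The matrix unit `E_{a,b}` (1-based indices): entry `(a,b)` is `1`, all others `0`. -/
def Estd {M N : ℕ} (a b : ℕ) : Matrix (Fin M) (Fin N) ℂ :=
  fun i j => if (i : ℕ) + 1 = a ∧ (j : ℕ) + 1 = b then 1 else 0

/-- Two pairs `(A₁, A₂)` and `(B₁, B₂)` of `m × n` complex matrices are equivalent if
`B₁ = R * A₁ * S` and `B₂ = R * A₂ * S` for some invertible `R`, `S`. -/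
def PairEquiv {m n : ℕ} (A₁ A₂ B₁ B₂ : Matrix (Fin m) (Fin n) ℂ) : Prop :=
  ∃ (R : Matrix (Fin m) (Fin m) ℂ) (S : Matrix (Fin n) (Fin n) ℂ),
    IsUnit R ∧ IsUnit S ∧ B₁ = R * A₁ * S ∧ B₂ = R * A₂ * S

open Polynomial

theorem Fin.sum_ite_add_val_eq {M : Type*} [AddCommMonoid M] {N : ℕ} (a d : ℕ)
    (f : Fin N → M) :
    (∑ k : Fin N, if (k : ℕ) + d = a then f k else 0) =
      if h : d ≤ a ∧ a - d < N then f ⟨a - d, h.2⟩ else 0 := by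
  split_ifs with h
  · rw [Finset.sum_eq_single ⟨a - d, h.2⟩
      (fun k _ hk => if_neg fun h' => hk (Fin.ext (show (k : ℕ) = a - d by omega))) (by simp)]
    exact if_pos (show a - d + d = a by omega)
  · exact Finset.sum_eq_zero fun k _ => if_neg (by omega)

theorem Fin.sum_ite_val_eq {M : Type*} [AddCommMonoid M] {N : ℕ} (c : ℕ) (f : Fin N → M) :
    (∑ i : Fin N, if (i : ℕ) = c then f i else 0) = if h : c < N then f ⟨c, h⟩ else 0 := by
  simpa using Fin.sum_ite_add_val_eq c 0 f

theorem Matrix.exists_mul_eq_one_of_vecMul_injective {K m n : Type*} [Field K] [Fintype m]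
    [DecidableEq m] [Fintype n] {A : Matrix m n K} (h : Function.Injective A.vecMul) :
    ∃ B : Matrix n m K, A * B = 1 := by
  rw [← mulVec_surjective_iff_exists_right_inverse]
  have hrank : A.rank = Fintype.card m := (vecMul_injective_iff.mp h).rank_matrix
  have : LinearMap.range A.mulVecLin = ⊤ :=
    Submodule.eq_top_of_finrank_eq (by simpa [Matrix.rank] using hrank)
  exact LinearMap.range_eq_top.mp this

theorem exists_mem_eval_ne_zero_of_isOpen {p : ℂ[X]} (hp : p ≠ 0) {s : Set ℂ} (hs : IsOpen s)
    (hne : s.Nonempty) : ∃ t ∈ s, p.eval t ≠ 0 := by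
  have hdense : Dense {t | p.IsRoot t}ᶜ :=
    (Polynomial.finite_setOfPred_isRoot hp).countable.dense_compl ℂ
  obtain ⟨t, hts, ht⟩ := hdense.inter_open_nonempty s hs hne
  exact ⟨t, hts, ht⟩

theorem map_evalRingHom_C_add_X_smul {α β : Type*} (M N : Matrix α β ℂ) (t : ℂ) :
    (M.map C + (X : ℂ[X]) • N.map C).map (evalRingHom t) = M + t • N := by
  ext i j
  simp only [map_apply, Matrix.add_apply, Matrix.smul_apply, smul_eq_mul, coe_evalRingHom,
    eval_add, eval_mul, eval_C, eval_X]

section KernelVec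
variable {R : Type*} [CommRing R] {ι κ : Type*} [Fintype ι] [DecidableEq ι] [Fintype κ]

/-- Up to the factor `det (L * Z)`, the projection of `x` onto `ker L` along `range Z`; being
division-free, it commutes with ring homomorphisms. -/
def kernelVec (L : Matrix ι κ R) (Z : Matrix κ ι R) (x : κ → R) : κ → R :=
  (L * Z).det • x - Z *ᵥ ((L * Z).adjugate *ᵥ (L *ᵥ x))

theorem mulVec_kernelVec (L : Matrix ι κ R) (Z : Matrix κ ι R) (x : κ → R) :
    L *ᵥ kernelVec L Z x = 0 := by
  rw [kernelVec, mulVec_sub, mulVec_smul, mulVec_mulVec, mulVec_mulVec, mul_adjugate,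
    smul_mulVec, one_mulVec, sub_self]

theorem kernelVec_of_mulVec_eq_zero {L : Matrix ι κ R} (Z : Matrix κ ι R) {x : κ → R}
    (hx : L *ᵥ x = 0) : kernelVec L Z x = (L * Z).det • x := by
  simp [kernelVec, hx]

theorem map_kernelVec {S : Type*} [CommRing S] (f : R →+* S) (L : Matrix ι κ R)
    (Z : Matrix κ ι R) (x : κ → R) (k : κ) :
    f (kernelVec L Z x k) = kernelVec (L.map f) (Z.map f) (f ∘ x) k := by
  have hL : f ∘ (L *ᵥ x) = L.map f *ᵥ (f ∘ x) := funext (RingHom.map_mulVec f L x)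
  have hadj : f ∘ ((L * Z).adjugate *ᵥ (L *ᵥ x)) =
      (L.map f * Z.map f).adjugate *ᵥ (L.map f *ᵥ (f ∘ x)) := by
    funext i
    rw [Function.comp_apply, RingHom.map_mulVec, hL, ← RingHom.mapMatrix_apply,
      RingHom.map_adjugate, RingHom.mapMatrix_apply, Matrix.map_mul]
  simp only [kernelVec, Pi.sub_apply, Pi.smul_apply, smul_eq_mul, map_sub, map_mul,
    RingHom.map_det, RingHom.mapMatrix_apply, Matrix.map_mul, RingHom.map_mulVec, hadj,
    Function.comp_apply]

end KernelVec

def zeroExtend {α : Type*} [Zero α] {p q : ℕ} (z : Fin p × Fin q → α) (k j : ℕ) : α :=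
  if h : k < p ∧ j < q then z (⟨k, h.1⟩, ⟨j, h.2⟩) else 0

theorem eq_zero_of_diagonal_shift {α : Type*} [Zero α] {m d : ℕ} (hd : 0 < d)
    {V : ℕ → ℕ → α} (hrow : ∀ k j, m ≤ k + d → V k j = 0)
    (hcol : ∀ k j, m + d ≤ j → V k j = 0)
    (hstart : ∀ k j, k < d → k < m → j < m → V k (j + d) = 0)
    (hstep : ∀ k j, k + d < m → j < m → V k j = V (k + d) (j + d)) (k j : ℕ) :
    V k j = 0 := by
  have above : ∀ k j, k + d ≤ j → V k j = 0 := by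
    intro k
    induction k using Nat.strong_induction_on with
    | _ k ih =>
      intro j hj
      by_cases hk : m ≤ k + d
      · exact hrow k j hk
      by_cases hjn : m + d ≤ j
      · exact hcol k j hjn
      obtain ⟨j, rfl⟩ : ∃ j', j = j' + d := ⟨j - d, by omega⟩
      by_cases hkd : k < d
      · exact hstart k j hkd (by omega) (by omega)
      obtain ⟨k, rfl⟩ : ∃ k', k = k' + d := ⟨k - d, by omega⟩
      rw [← hstep k j (by omega) (by omega)]
      exact ih k (by omega) j (by omega)
  have below : ∀ k j, j < k + d → V k j = 0 := by
    intro k j hj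
    induction hm : m - k using Nat.strong_induction_on generalizing k j with
    | _ s ih =>
      by_cases hk : m ≤ k + d
      · exact hrow k j hk
      rw [hstep k j (by omega) (by omega)]
      exact ih (m - (k + d)) (by omega) (k + d) (j + d) (by omega) rfl
  rcases lt_or_ge j (k + d) with h | h
  · exact below k j h
  · exact above k j h

section ShiftEquation
variable {R : Type*} [CommRing R] {m n : ℕ}

def shiftEqn (d : ℕ) (A B : Matrix (Fin m) (Fin n) R) :
    Matrix (Fin (m - d) × Fin n) (Fin m × Fin m) R := fun e c =>
  (if (c.1 : ℕ) = e.1 + d then A c.2 e.2 else 0) - (if (c.1 : ℕ) = e.1 then B c.2 e.2 else 0)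

theorem shiftEqn_mulVec (d : ℕ) (A B : Matrix (Fin m) (Fin n) R) (U : Matrix (Fin m) (Fin m) R)
    (k : Fin (m - d)) (j : Fin n) :
    (shiftEqn d A B *ᵥ fun c => U c.1 c.2) (k, j) =
      (U * A) ⟨k + d, by omega⟩ j - (U * B) ⟨k, by omega⟩ j := by
  simp only [mulVec, dotProduct, shiftEqn, Fintype.sum_prod_type, sub_mul, ite_mul, zero_mul,
    Finset.sum_sub_distrib, Finset.sum_ite_irrel, Finset.sum_const_zero, Fin.sum_ite_val_eq,
    mul_apply, mul_comm (A _ _), mul_comm (B _ _)]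
  rw [dif_pos (by omega), dif_pos (by omega)]

theorem map_shiftEqn {S : Type*} [CommRing S] (f : R →+* S) (d : ℕ)
    (A B : Matrix (Fin m) (Fin n) R) :
    (shiftEqn d A B).map f = shiftEqn d (A.map f) (B.map f) := by
  ext e c
  simp only [shiftEqn, map_apply, map_sub, apply_ite f, map_zero]

end ShiftEquation

section Factors
variable {R : Type*} [CommRing R] {m n : ℕ}

def leftFactor (Z : Matrix (Fin m × Fin m) (Fin (m - (n - m)) × Fin n) R)
    (A B : Matrix (Fin m) (Fin n) R) : Matrix (Fin m) (Fin m) R :=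
  Matrix.of fun a b =>
    kernelVec (shiftEqn (n - m) A B) Z (fun c => (1 : Matrix (Fin m) (Fin m) R) c.1 c.2) (a, b)

def stackRows (M₁ M₂ : Matrix (Fin m) (Fin n) R) : Matrix (Fin n) (Fin n) R := fun r j =>
  if h : (r : ℕ) < m then M₁ ⟨r, h⟩ j
  else if h' : n - m ≤ r then M₂ ⟨r - (n - m), by omega⟩ j
  else (1 : Matrix (Fin n) (Fin n) R) r j

def normalFormDet (Z : Matrix (Fin m × Fin m) (Fin (m - (n - m)) × Fin n) R)
    (A B : Matrix (Fin m) (Fin n) R) : R :=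
  (leftFactor Z A B).det * (stackRows (leftFactor Z A B * A) (leftFactor Z A B * B)).det

theorem leftFactor_mul_shift (Z : Matrix (Fin m × Fin m) (Fin (m - (n - m)) × Fin n) R)
    (A B : Matrix (Fin m) (Fin n) R) (k : ℕ) (hk : k + (n - m) < m) (j : Fin n) :
    (leftFactor Z A B * A) ⟨k + (n - m), hk⟩ j =
      (leftFactor Z A B * B) ⟨k, by omega⟩ j := by
  have h := congrFun (mulVec_kernelVec (shiftEqn (n - m) A B) Z
    (fun c => (1 : Matrix (Fin m) (Fin m) R) c.1 c.2)) (⟨k, by omega⟩, j)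
  rwa [show kernelVec _ Z _ = fun c => leftFactor Z A B c.1 c.2 from rfl, shiftEqn_mulVec,
    Pi.zero_apply, sub_eq_zero] at h

variable {S : Type*} [CommRing S] (f : R →+* S)

theorem map_leftFactor (Z : Matrix (Fin m × Fin m) (Fin (m - (n - m)) × Fin n) R)
    (A B : Matrix (Fin m) (Fin n) R) :
    (leftFactor Z A B).map f = leftFactor (Z.map f) (A.map f) (B.map f) := by
  ext a b
  simp only [leftFactor, map_apply, of_apply, map_kernelVec, map_shiftEqn]
  congr 2
  funext c
  simp [one_apply, apply_ite f]

theorem map_stackRows (M₁ M₂ : Matrix (Fin m) (Fin n) R) :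
    (stackRows M₁ M₂).map f = stackRows (M₁.map f) (M₂.map f) := by
  ext r j
  simp only [stackRows, map_apply, one_apply]
  split_ifs <;> simp

theorem map_normalFormDet (Z : Matrix (Fin m × Fin m) (Fin (m - (n - m)) × Fin n) R)
    (A B : Matrix (Fin m) (Fin n) R) :
    f (normalFormDet Z A B) = normalFormDet (Z.map f) (A.map f) (B.map f) := by
  simp only [normalFormDet, map_mul, RingHom.map_det, RingHom.mapMatrix_apply, map_stackRows,
    Matrix.map_mul, map_leftFactor]

end Factors

theorem place_one_apply {k N : ℕ} (c : ℕ) (i : Fin k) (j : Fin N) :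
    (place 0 c (1 : Matrix (Fin k) (Fin k) ℂ) : Matrix (Fin k) (Fin N) ℂ) i j =
      if (j : ℕ) = i + c then 1 else 0 := by
  unfold place
  simp only [Matrix.one_apply, Fin.ext_iff]
  split_ifs <;> first | rfl | omega

theorem place_one_mul_apply {k N : ℕ} {α : Type*} (c : ℕ) (hc : k + c ≤ N)
    (M : Matrix (Fin N) α ℂ) (i : Fin k) (j : α) :
    ((place 0 c (1 : Matrix (Fin k) (Fin k) ℂ) : Matrix (Fin k) (Fin N) ℂ) * M) i j =
      M ⟨i + c, by omega⟩ j := by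
  simp only [mul_apply, place_one_apply, ite_mul, one_mul, zero_mul, Fin.sum_ite_val_eq]
  rw [dif_pos (by omega)]

section Canonical
variable (m n : ℕ)

def blockIdLeft : Matrix (Fin m) (Fin n) ℂ := place 0 0 (1 : Matrix (Fin m) (Fin m) ℂ)
def blockIdRight : Matrix (Fin m) (Fin n) ℂ := place 0 (n - m) (1 : Matrix (Fin m) (Fin m) ℂ)

variable {m n}

theorem blockIdLeft_apply (i : Fin m) (j : Fin n) :
    blockIdLeft m n i j = if (j : ℕ) = i then 1 else 0 := place_one_apply 0 i j

theorem blockIdRight_apply (i : Fin m) (j : Fin n) :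
    blockIdRight m n i j = if (j : ℕ) = i + (n - m) then 1 else 0 := place_one_apply _ i j

theorem vecMul_shiftEqn_canonical (hmn : m ≤ n) (z : Fin (m - (n - m)) × Fin n → ℂ)
    (a b : Fin m) :
    (z ᵥ* shiftEqn (n - m) (blockIdLeft m n) (blockIdRight m n)) (a, b) =
      (if n - m ≤ a then zeroExtend z (a - (n - m)) b else 0) - zeroExtend z a (b + (n - m)) := by
  simp only [vecMul, dotProduct, shiftEqn, Fintype.sum_prod_type, blockIdLeft_apply,
    blockIdRight_apply, mul_sub, mul_ite, mul_one, mul_zero, Finset.sum_sub_distrib,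
    Finset.sum_ite_irrel, Finset.sum_const_zero, Fin.sum_ite_val_eq, @eq_comm ℕ a,
    Fin.sum_ite_add_val_eq, zeroExtend]
  have := a.isLt
  have := b.isLt
  congr 1
  · split_ifs <;> first | rfl | omega
  · split_ifs <;> first | rfl | omega

theorem exists_shiftEqn_canonical_mul_eq_one (hmn : m < n) :
    ∃ Z : Matrix (Fin m × Fin m) (Fin (m - (n - m)) × Fin n) ℂ,
      shiftEqn (n - m) (blockIdLeft m n) (blockIdRight m n) * Z = 1 := by
  refine exists_mul_eq_one_of_vecMul_injective ?_
  rw [← coe_vecMulLinear, injective_iff_map_eq_zero]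
  intro z hz
  have hres (a b : Fin m) :=
    (vecMul_shiftEqn_canonical hmn.le z a b).symm.trans (congrFun hz (a, b))
  have hV := eq_zero_of_diagonal_shift (m := m) (d := n - m) (V := zeroExtend z) (by omega)
    (fun k j hk => dif_neg (by omega)) (fun k j hj => dif_neg (by omega))
    (fun k j hk hkm hjm => by simpa [Nat.not_le.mpr hk] using hres ⟨k, hkm⟩ ⟨j, hjm⟩)
    (fun k j hk hjm => by simpa [sub_eq_zero] using hres ⟨k + (n - m), hk⟩ ⟨j, hjm⟩)
  funext e
  simpa [zeroExtend] using hV e.1 e.2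

theorem blockIdLeft_mul_stackRows (hmn : m ≤ n) (M₁ M₂ : Matrix (Fin m) (Fin n) ℂ) :
    blockIdLeft m n * stackRows M₁ M₂ = M₁ := by
  ext i j
  rw [blockIdLeft, place_one_mul_apply _ (by omega), stackRows, dif_pos (by simp)]
  rfl

theorem blockIdRight_mul_stackRows (hmn : m ≤ n) {M₁ M₂ : Matrix (Fin m) (Fin n) ℂ}
    (h : ∀ k (hk : k + (n - m) < m) j, M₁ ⟨k + (n - m), hk⟩ j = M₂ ⟨k, by omega⟩ j) :
    blockIdRight m n * stackRows M₁ M₂ = M₂ := by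
  ext i j
  rw [blockIdRight, place_one_mul_apply _ (by omega), stackRows]
  split_ifs with h₁ h₂
  · exact h i h₁ j
  · simp
  · exact absurd (by simp) h₂

theorem stackRows_canonical :
    stackRows (blockIdLeft m n) (blockIdRight m n) = 1 := by
  ext r j
  simp only [stackRows, blockIdLeft_apply, blockIdRight_apply, one_apply, Fin.ext_iff]
  split_ifs <;> first | rfl | omega

theorem leftFactor_canonical {Z : Matrix (Fin m × Fin m) (Fin (m - (n - m)) × Fin n) ℂ}
    (hZ : shiftEqn (n - m) (blockIdLeft m n) (blockIdRight m n) * Z = 1) :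
    leftFactor Z (blockIdLeft m n) (blockIdRight m n) = 1 := by
  have hker : shiftEqn (n - m) (blockIdLeft m n) (blockIdRight m n) *ᵥ
      (fun c => (1 : Matrix (Fin m) (Fin m) ℂ) c.1 c.2) = 0 := by
    funext e
    rw [shiftEqn_mulVec, Matrix.one_mul, Matrix.one_mul, blockIdLeft_apply, blockIdRight_apply]
    simp
  ext a b
  simp [leftFactor, kernelVec_of_mulVec_eq_zero Z hker, hZ]

theorem normalFormDet_canonical {Z : Matrix (Fin m × Fin m) (Fin (m - (n - m)) × Fin n) ℂ}
    (hZ : shiftEqn (n - m) (blockIdLeft m n) (blockIdRight m n) * Z = 1) :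
    normalFormDet Z (blockIdLeft m n) (blockIdRight m n) = 1 := by
  simp [normalFormDet, leftFactor_canonical hZ, stackRows_canonical]

theorem pairEquiv_of_normalFormDet_ne_zero (hmn : m ≤ n)
    {Z : Matrix (Fin m × Fin m) (Fin (m - (n - m)) × Fin n) ℂ}
    {A B : Matrix (Fin m) (Fin n) ℂ} (h : normalFormDet Z A B ≠ 0) :
    PairEquiv A B (blockIdLeft m n) (blockIdRight m n) := by
  set U := leftFactor Z A B
  set S := stackRows (U * A) (U * B)
  obtain ⟨hU, hS⟩ : U.det ≠ 0 ∧ S.det ≠ 0 := mul_ne_zero_iff.mp h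
  have hSu : IsUnit S.det := isUnit_iff_ne_zero.mpr hS
  refine ⟨U, S⁻¹, (isUnit_iff_isUnit_det U).mpr (isUnit_iff_ne_zero.mpr hU),
    isUnit_nonsing_inv_iff.mpr ((isUnit_iff_isUnit_det S).mpr hSu), ?_, ?_⟩
  · rw [← blockIdLeft_mul_stackRows hmn (U * A) (U * B), mul_nonsing_inv_cancel_right _ _ hSu]
  · rw [← blockIdRight_mul_stackRows hmn (leftFactor_mul_shift Z A B),
      mul_nonsing_inv_cancel_right _ _ hSu]

end Canonical

theorem generic_pencil_wide (m n : ℕ) (hmn : m < n) (A B : Matrix (Fin m) (Fin n) ℂ)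
    (ε : ℝ) (hε : 0 < ε) :
    ∃ A' B' : Matrix (Fin m) (Fin n) ℂ,
      (∀ i j, ‖A i j - A' i j‖ < ε) ∧
      (∀ i j, ‖B i j - B' i j‖ < ε) ∧
      PairEquiv A' B'
        (place 0 0 (1 : Matrix (Fin m) (Fin m) ℂ))
        (place 0 (n - m) (1 : Matrix (Fin m) (Fin m) ℂ)) := by
  obtain ⟨Z, hZ⟩ := exists_shiftEqn_canonical_mul_eq_one hmn
  set P := blockIdLeft m n
  set Q := blockIdRight m n
  set q : ℂ[X] := normalFormDet (Z.map C) (P.map C + (X : ℂ[X]) • (A - P).map C)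
    (Q.map C + (X : ℂ[X]) • (B - Q).map C)
  have hq (t : ℂ) : q.eval t = normalFormDet Z (P + t • (A - P)) (Q + t • (B - Q)) := by
    have hZt : (Z.map C).map (evalRingHom t) = Z := by ext; simp
    rw [← coe_evalRingHom, map_normalFormDet, map_evalRingHom_C_add_X_smul,
      map_evalRingHom_C_add_X_smul, hZt]
  have hq0 : q ≠ 0 := fun h => by
    have h0 := hq 0
    rw [zero_smul, add_zero, zero_smul, add_zero, normalFormDet_canonical hZ, h, eval_zero] at h0
    exact zero_ne_one h0
  have hopen : IsOpen {t : ℂ | ∀ i j, ‖A i j - (P + t • (A - P)) i j‖ < ε ∧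
      ‖B i j - (Q + t • (B - Q)) i j‖ < ε} := by
    simp only [Set.ofPred_forall, Set.ofPred_and, Matrix.add_apply,
      Matrix.smul_apply, smul_eq_mul]
    refine isOpen_iInter_of_finite fun i => isOpen_iInter_of_finite fun j => ?_
    exact (isOpen_lt (by fun_prop) continuous_const).inter
      (isOpen_lt (by fun_prop) continuous_const)
  obtain ⟨t, hts, ht⟩ := exists_mem_eval_ne_zero_of_isOpen hq0 hopen ⟨1, by simp [hε]⟩
  exact ⟨_, _, fun i j => (hts i j).1, fun i j => (hts i j).2,
    pairEquiv_of_normalFormDet_ne_zero hmn.le (hq t ▸ ht)⟩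
end
end

section
/- Let m > n. For every pair (A,B) of m×n complex matrices and every ε > 0, there exist m×n complex matrices (A',B') with |A_{ij} − A'_{ij}| < ε and |B_{ij} − B'_{ij}| < ε for all i,j, such that the pair (A',B') is equivalent to the pair ([Iₙ 0]ᵀ, [0 Iₙ]ᵀ), where [Iₙ 0]ᵀ is the m×n matrix whose first n rows form the identity Iₙ and whose remaining rows are zero, and [0 Iₙ]ᵀ is the m×n matrix whose last n rows form the identity Iₙ and whose first m−n rows are zero. -/
open Matrix

noncomputable section

/-!
Write `m = n + d`. Invertibility of a square block is a dense condition, and under such conditions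
the problem reduces to a smaller one. If the top `n × n` block of `A` is invertible, a row
operation turns `A` into `[Iₙ; 0]`, so it suffices to approximate pencils `([Iₙ; 0], C)`.
If `n ≤ d` and the bottom `n × n` block of `C` is invertible, the columns of `[Iₙ; 0]`, the unit
vectors `e_n, …, e_{d-1}` and the columns of `C` form an invertible matrix `M` with
`M [Iₙ; 0] = [Iₙ; 0]` and `M [0; Iₙ] = C`. If `e = n - d > 0` and the bottom-right `d × d` block
of `C` is invertible, a change of basis brings `C` to `[N₁ N₂; 0 I_d]` with `N₁` of size `n × e`,
and this pencil is standard as soon as `([I_e; 0], N₁)` is: the size `(m, n)` descends to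
`(n, e)` as in the Euclidean algorithm.
-/

/-- The matrix of `ℂ^a → ℂ^M`, `e_p ↦ e_{r+p}`; basis vectors with `r + p ≥ M` are sent to `0`. -/
def coordEmbed (M a r : ℕ) : Matrix (Fin M) (Fin a) ℂ :=
  Matrix.of fun i p => if (i : ℕ) = r + p then 1 else 0

lemma coordEmbed_transpose_mul_apply {M a b : ℕ} (r s : ℕ) (p : Fin a) (q : Fin b) :
    ((coordEmbed M a r)ᵀ * coordEmbed M b s) p q =
      if r + (p : ℕ) = s + q ∧ r + (p : ℕ) < M then 1 else 0 := by
  simp only [Matrix.mul_apply, Matrix.transpose_apply, coordEmbed, Matrix.of_apply, mul_ite,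
    mul_one, mul_zero]
  rw [Fin.sum_univ_eq_sum_range (fun k => if k = s + (q : ℕ) then
    (if k = r + (p : ℕ) then (1 : ℂ) else 0) else 0), Finset.sum_ite_eq']
  simp only [Finset.mem_range]
  split_ifs <;> first | rfl | omega

lemma coordEmbed_transpose_mul_self {M a r : ℕ} (h : r + a ≤ M) :
    (coordEmbed M a r)ᵀ * coordEmbed M a r = 1 := by
  ext p q
  rw [coordEmbed_transpose_mul_apply, Matrix.one_apply]
  split_ifs <;> simp_all [Fin.ext_iff]; omega

lemma coordEmbed_transpose_mul_of_disjoint {M a b r s : ℕ} (h : r + a ≤ s ∨ s + b ≤ r) :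
    (coordEmbed M a r)ᵀ * coordEmbed M b s = 0 := by
  ext p q
  rw [coordEmbed_transpose_mul_apply, if_neg (by omega), Matrix.zero_apply]

lemma coordEmbed_mul_coordEmbed {M K a : ℕ} (r : ℕ) {s : ℕ} (h : s + a ≤ K) :
    coordEmbed M K r * coordEmbed K a s = coordEmbed M a (r + s) := by
  ext i p
  simp only [Matrix.mul_apply, coordEmbed, Matrix.of_apply, mul_ite, mul_one, mul_zero]
  rw [Fin.sum_univ_eq_sum_range (fun k => if k = s + (p : ℕ) then
    (if (i : ℕ) = r + k then (1 : ℂ) else 0) else 0), Finset.sum_ite_eq']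
  simp only [Finset.mem_range]
  split_ifs <;> first | rfl | omega

lemma coordEmbed_zero_self (M : ℕ) : coordEmbed M M 0 = 1 := by
  ext i p
  simp only [coordEmbed, Matrix.of_apply, Matrix.one_apply, zero_add, Fin.val_inj]

lemma sum_ite_val_eq_add {α : Type*} [AddCommMonoid α] {a : ℕ} (x r : ℕ) (f : Fin a → α) :
    ∑ p : Fin a, (if x = r + p then f p else 0) =
      if h : r ≤ x ∧ x < r + a then f ⟨x - r, by omega⟩ else 0 := by
  split_ifs with h
  · rw [Fintype.sum_eq_single ⟨x - r, by omega⟩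
      fun p hp => if_neg fun hx => hp (by ext; simp; omega)]
    exact if_pos (by simp; omega)
  · exact Finset.sum_eq_zero fun p _ => if_neg (by omega)

lemma place_eq_coordEmbed_mul {M N a b : ℕ} (r c : ℕ) (A : Matrix (Fin a) (Fin b) ℂ) :
    (place r c A : Matrix (Fin M) (Fin N) ℂ) = coordEmbed M a r * A * (coordEmbed N b c)ᵀ := by
  ext i j
  simp only [Matrix.mul_apply, Matrix.transpose_apply, coordEmbed, Matrix.of_apply, ite_mul,
    one_mul, zero_mul, mul_ite, mul_one, mul_zero, sum_ite_val_eq_add]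
  unfold place
  split_ifs <;> rfl

lemma place_mul_place {M K N a b c : ℕ} (r s t : ℕ) (h : s + b ≤ K)
    (A : Matrix (Fin a) (Fin b) ℂ) (B : Matrix (Fin b) (Fin c) ℂ) :
    (place r s A : Matrix (Fin M) (Fin K) ℂ) * (place s t B : Matrix (Fin K) (Fin N) ℂ) =
      place r t (A * B) := by
  simp only [place_eq_coordEmbed_mul, Matrix.mul_assoc,
    ← Matrix.mul_assoc (coordEmbed K b s)ᵀ, coordEmbed_transpose_mul_self h, Matrix.one_mul]

lemma place_mul_place_of_disjoint {M K N a b b' c : ℕ} (r s s' t : ℕ)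
    (h : s + b ≤ s' ∨ s' + b' ≤ s) (A : Matrix (Fin a) (Fin b) ℂ)
    (B : Matrix (Fin b') (Fin c) ℂ) :
    (place r s A : Matrix (Fin M) (Fin K) ℂ) * (place s' t B : Matrix (Fin K) (Fin N) ℂ) = 0 := by
  simp only [place_eq_coordEmbed_mul, Matrix.mul_assoc,
    ← Matrix.mul_assoc (coordEmbed K b s)ᵀ, coordEmbed_transpose_mul_of_disjoint h,
    Matrix.zero_mul, Matrix.mul_zero]

lemma place_place {M N K L a b : ℕ} (r c : ℕ) {r' c' : ℕ} (h₁ : r' + a ≤ K) (h₂ : c' + b ≤ L)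
    (A : Matrix (Fin a) (Fin b) ℂ) :
    (place r c (place r' c' A : Matrix (Fin K) (Fin L) ℂ) : Matrix (Fin M) (Fin N) ℂ) =
      place (r + r') (c + c') A := by
  simp only [place_eq_coordEmbed_mul, ← coordEmbed_mul_coordEmbed r h₁,
    ← coordEmbed_mul_coordEmbed c h₂, Matrix.transpose_mul, Matrix.mul_assoc]

lemma place_zero_zero_self {M N : ℕ} (A : Matrix (Fin M) (Fin N) ℂ) : place 0 0 A = A := by
  rw [place_eq_coordEmbed_mul, coordEmbed_zero_self, coordEmbed_zero_self, Matrix.transpose_one,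
    Matrix.one_mul, Matrix.mul_one]

lemma place_mul {M K N a : ℕ} (r : ℕ) (A : Matrix (Fin a) (Fin K) ℂ)
    (B : Matrix (Fin K) (Fin N) ℂ) :
    (place r 0 A : Matrix (Fin M) (Fin K) ℂ) * B = place r 0 (A * B) := by
  simp only [place_eq_coordEmbed_mul, coordEmbed_zero_self, Matrix.transpose_one,
    Matrix.mul_one, Matrix.mul_assoc]

lemma place_add {M N a b : ℕ} (r c : ℕ) (A B : Matrix (Fin a) (Fin b) ℂ) :
    (place r c (A + B) : Matrix (Fin M) (Fin N) ℂ) = place r c A + place r c B := by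
  simp only [place_eq_coordEmbed_mul, Matrix.mul_add, Matrix.add_mul]

lemma place_sub {M N a b : ℕ} (r c : ℕ) (A B : Matrix (Fin a) (Fin b) ℂ) :
    (place r c (A - B) : Matrix (Fin M) (Fin N) ℂ) = place r c A - place r c B := by
  simp only [place_eq_coordEmbed_mul, Matrix.mul_sub, Matrix.sub_mul]

lemma place_neg {M N a b : ℕ} (r c : ℕ) (A : Matrix (Fin a) (Fin b) ℂ) :
    (place r c (-A) : Matrix (Fin M) (Fin N) ℂ) = -place r c A := by
  simp only [place_eq_coordEmbed_mul, Matrix.mul_neg, Matrix.neg_mul]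

lemma place_zero {M N a b : ℕ} (r c : ℕ) :
    (place r c (0 : Matrix (Fin a) (Fin b) ℂ) : Matrix (Fin M) (Fin N) ℂ) = 0 := by
  simp only [place_eq_coordEmbed_mul, Matrix.mul_zero, Matrix.zero_mul]

lemma continuous_place {M N a b : ℕ} (r c : ℕ) :
    Continuous (place r c : Matrix (Fin a) (Fin b) ℂ → Matrix (Fin M) (Fin N) ℂ) := by
  simp_rw [funext (place_eq_coordEmbed_mul (M := M) (N := N) r c)]
  fun_prop

lemma one_eq_place_add_place {M a b : ℕ} (h : a + b = M) :
    (1 : Matrix (Fin M) (Fin M) ℂ) =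
      place 0 0 (1 : Matrix (Fin a) (Fin a) ℂ) + place a a (1 : Matrix (Fin b) (Fin b) ℂ) := by
  subst h
  ext i j
  simp only [Matrix.add_apply, place, Matrix.one_apply, Fin.ext_iff]
  split_ifs <;> first | omega | simp

/-- The `a × b` block of `A` in rows `r, …, r + a - 1` and columns `c, …, c + b - 1`,
padded with zeros where it sticks out of `A`. -/
def subblock {M N : ℕ} (r c a b : ℕ) (A : Matrix (Fin M) (Fin N) ℂ) : Matrix (Fin a) (Fin b) ℂ :=
  (coordEmbed M a r)ᵀ * A * coordEmbed N b c

lemma subblock_add {M N a b : ℕ} (r c : ℕ) (A B : Matrix (Fin M) (Fin N) ℂ) :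
    subblock r c a b (A + B) = subblock r c a b A + subblock r c a b B := by
  simp only [subblock, Matrix.mul_add, Matrix.add_mul]

lemma subblock_smul {M N a b : ℕ} (r c : ℕ) (t : ℂ) (A : Matrix (Fin M) (Fin N) ℂ) :
    subblock r c a b (t • A) = t • subblock r c a b A := by
  simp only [subblock, Matrix.mul_smul, Matrix.smul_mul]

lemma subblock_place_self {M N a b r c : ℕ} (h₁ : r + a ≤ M) (h₂ : c + b ≤ N)
    (A : Matrix (Fin a) (Fin b) ℂ) :
    subblock r c a b (place r c A : Matrix (Fin M) (Fin N) ℂ) = A := by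
  simp only [subblock, place_eq_coordEmbed_mul, Matrix.mul_assoc,
    coordEmbed_transpose_mul_self h₂, ← Matrix.mul_assoc (coordEmbed M a r)ᵀ,
    coordEmbed_transpose_mul_self h₁, Matrix.one_mul, Matrix.mul_one]

lemma subblock_subblock {M N a₁ b₁ a₂ b₂ : ℕ} (r₁ c₁ : ℕ) {r₂ c₂ : ℕ} (h₁ : r₂ + a₂ ≤ a₁)
    (h₂ : c₂ + b₂ ≤ b₁) (A : Matrix (Fin M) (Fin N) ℂ) :
    subblock r₂ c₂ a₂ b₂ (subblock r₁ c₁ a₁ b₁ A) = subblock (r₁ + r₂) (c₁ + c₂) a₂ b₂ A := by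
  simp only [subblock, ← coordEmbed_mul_coordEmbed r₁ h₁, ← coordEmbed_mul_coordEmbed c₁ h₂,
    Matrix.transpose_mul, Matrix.mul_assoc]

lemma mul_place_one_eq_subblock {M N a : ℕ} (A : Matrix (Fin M) (Fin N) ℂ) :
    A * (place 0 0 (1 : Matrix (Fin a) (Fin a) ℂ) : Matrix (Fin N) (Fin a) ℂ) =
      subblock 0 0 M a A := by
  simp only [place_eq_coordEmbed_mul, subblock, coordEmbed_zero_self, Matrix.transpose_one,
    Matrix.mul_one, Matrix.one_mul]

lemma eq_place_add_place_rows {M N a b : ℕ} (h : a + b = M) (A : Matrix (Fin M) (Fin N) ℂ) :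
    A = place 0 0 (subblock 0 0 a N A) + place a 0 (subblock a 0 b N A) := by
  conv_lhs => rw [← Matrix.one_mul A, one_eq_place_add_place h]
  simp only [place_eq_coordEmbed_mul, subblock, coordEmbed_zero_self, Matrix.transpose_one,
    Matrix.mul_one, Matrix.add_mul, Matrix.mul_assoc]

lemma eq_place_add_place_cols {M N a b : ℕ} (h : a + b = N) (A : Matrix (Fin M) (Fin N) ℂ) :
    A = place 0 0 (subblock 0 0 M a A) + place 0 a (subblock 0 a M b A) := by
  conv_lhs => rw [← Matrix.mul_one A, one_eq_place_add_place h]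
  simp only [place_eq_coordEmbed_mul, subblock, coordEmbed_zero_self, Matrix.transpose_one,
    Matrix.one_mul, Matrix.mul_add, Matrix.mul_assoc]

lemma det_place_upper {M a b : ℕ} (h : a + b = M) (P : Matrix (Fin a) (Fin a) ℂ)
    (Q : Matrix (Fin a) (Fin b) ℂ) (S : Matrix (Fin b) (Fin b) ℂ) :
    (place 0 0 P + place 0 a Q + place a a S : Matrix (Fin M) (Fin M) ℂ).det = P.det * S.det := by
  subst h
  rw [← Matrix.det_fromBlocks_zero₂₁ P Q S, ← Matrix.det_submatrix_equiv_self finSumFinEquiv]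
  congr 1
  ext (i | i) (j | j) <;> simp [place]
  split_ifs <;> first | rfl | omega | simp

lemma det_place_lower {M a b : ℕ} (h : a + b = M) (P : Matrix (Fin a) (Fin a) ℂ)
    (Q : Matrix (Fin b) (Fin a) ℂ) (S : Matrix (Fin b) (Fin b) ℂ) :
    (place 0 0 P + place a 0 Q + place a a S : Matrix (Fin M) (Fin M) ℂ).det = P.det * S.det := by
  subst h
  rw [← Matrix.det_fromBlocks_zero₁₂ P Q S, ← Matrix.det_submatrix_equiv_self finSumFinEquiv]
  congr 1
  ext (i | i) (j | j) <;> simp [place]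
  split_ifs <;> first | rfl | omega | simp

lemma isUnit_place_upper_iff {M a b : ℕ} (h : a + b = M) {P : Matrix (Fin a) (Fin a) ℂ}
    {Q : Matrix (Fin a) (Fin b) ℂ} {S : Matrix (Fin b) (Fin b) ℂ} :
    IsUnit (place 0 0 P + place 0 a Q + place a a S : Matrix (Fin M) (Fin M) ℂ) ↔
      IsUnit P ∧ IsUnit S := by
  simp only [Matrix.isUnit_iff_isUnit_det, det_place_upper h, IsUnit.mul_iff]

lemma isUnit_place_lower_iff {M a b : ℕ} (h : a + b = M) {P : Matrix (Fin a) (Fin a) ℂ}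
    {Q : Matrix (Fin b) (Fin a) ℂ} {S : Matrix (Fin b) (Fin b) ℂ} :
    IsUnit (place 0 0 P + place a 0 Q + place a a S : Matrix (Fin M) (Fin M) ℂ) ↔
      IsUnit P ∧ IsUnit S := by
  simp only [Matrix.isUnit_iff_isUnit_det, det_place_lower h, IsUnit.mul_iff]

section PairEquiv

variable {m n : ℕ} {A₁ A₂ B₁ B₂ C₁ C₂ : Matrix (Fin m) (Fin n) ℂ}

lemma pairEquiv_iff_exists_mul_eq_mul :
    PairEquiv A₁ A₂ B₁ B₂ ↔ ∃ (R : Matrix (Fin m) (Fin m) ℂ) (S : Matrix (Fin n) (Fin n) ℂ),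
      IsUnit R ∧ IsUnit S ∧ R * A₁ = B₁ * S ∧ R * A₂ = B₂ * S := by
  constructor
  · rintro ⟨R, S, hR, ⟨s, rfl⟩, rfl, rfl⟩
    exact ⟨R, ↑s⁻¹, hR, s⁻¹.isUnit, by simp [Matrix.mul_assoc], by simp [Matrix.mul_assoc]⟩
  · rintro ⟨R, S, hR, ⟨s, rfl⟩, h₁, h₂⟩
    exact ⟨R, ↑s⁻¹, hR, s⁻¹.isUnit, by simp [h₁, Matrix.mul_assoc],
      by simp [h₂, Matrix.mul_assoc]⟩

lemma PairEquiv.symm (h : PairEquiv A₁ A₂ B₁ B₂) : PairEquiv B₁ B₂ A₁ A₂ := by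
  obtain ⟨R, S, ⟨r, rfl⟩, ⟨s, rfl⟩, rfl, rfl⟩ := h
  exact ⟨↑r⁻¹, ↑s⁻¹, r⁻¹.isUnit, s⁻¹.isUnit, by simp [Matrix.mul_assoc],
    by simp [Matrix.mul_assoc]⟩

lemma PairEquiv.trans (h : PairEquiv A₁ A₂ B₁ B₂) (h' : PairEquiv B₁ B₂ C₁ C₂) :
    PairEquiv A₁ A₂ C₁ C₂ := by
  obtain ⟨R, S, hR, hS, rfl, rfl⟩ := h
  obtain ⟨R', S', hR', hS', rfl, rfl⟩ := h'
  exact ⟨R' * R, S * S', hR'.mul hR, hS.mul hS', by simp only [Matrix.mul_assoc],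
    by simp only [Matrix.mul_assoc]⟩

end PairEquiv

def idTop (m n : ℕ) : Matrix (Fin m) (Fin n) ℂ := place 0 0 (1 : Matrix (Fin n) (Fin n) ℂ)

def idBot (m n : ℕ) : Matrix (Fin m) (Fin n) ℂ := place (m - n) 0 (1 : Matrix (Fin n) (Fin n) ℂ)

lemma pairEquiv_idTop_of_isUnit_subblock {m n d : ℕ} (hm : n + d = m) (hnd : n ≤ d)
    {C : Matrix (Fin m) (Fin n) ℂ} (hC : IsUnit (subblock d 0 n n C)) :
    PairEquiv (idTop m n) C (idTop m n) (idBot m n) := by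
  set M : Matrix (Fin m) (Fin m) ℂ := place 0 0 (1 : Matrix (Fin n) (Fin n) ℂ)
    + place n n (1 : Matrix (Fin (d - n)) (Fin (d - n)) ℂ) + place 0 d C
  have hM : IsUnit M := by
    have hId : (place 0 0 (1 : Matrix (Fin d) (Fin d) ℂ) : Matrix (Fin m) (Fin m) ℂ) =
        place 0 0 (1 : Matrix (Fin n) (Fin n) ℂ) +
          place n n (1 : Matrix (Fin (d - n)) (Fin (d - n)) ℂ) := by
      rw [one_eq_place_add_place (show n + (d - n) = d by omega), place_add,
        place_place 0 0 (by omega) (by omega), place_place 0 0 (by omega) (by omega)]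
      simp only [zero_add]
    have hCsplit : (place 0 d C : Matrix (Fin m) (Fin m) ℂ) =
        place 0 d (subblock 0 0 d n C) + place d d (subblock d 0 n n C) := by
      conv_lhs => rw [eq_place_add_place_rows (show d + n = m by omega) C]
      rw [place_add, place_place 0 d (by omega) (by omega), place_place 0 d (by omega) (by omega)]
      simp only [add_zero, zero_add]
    have hupper := (isUnit_place_upper_iff (Q := subblock 0 0 d n C)
      (show d + n = m by omega)).mpr ⟨isUnit_one, hC⟩
    rwa [hId, add_assoc _ (place 0 d _), ← hCsplit] at hupper
  refine (pairEquiv_iff_exists_mul_eq_mul.mpr ⟨M, 1, hM, isUnit_one, ?_, ?_⟩).symm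
  · simp (disch := omega) only [M, idTop, Matrix.add_mul, place_mul_place,
      place_mul_place_of_disjoint, Matrix.mul_one, add_zero]
  · simp (disch := omega) only [M, idBot, show m - n = d by omega, Matrix.add_mul,
      place_mul_place, place_mul_place_of_disjoint, Matrix.mul_one, zero_add, place_zero_zero_self]

lemma exists_isUnit_mul_eq_place_one {n d e : ℕ} (hn : e + d = n) {D : Matrix (Fin d) (Fin n) ℂ}
    (hD : IsUnit (subblock 0 e d d D)) :
    ∃ Y : Matrix (Fin n) (Fin n) ℂ,
      IsUnit Y ∧ D * Y = place 0 e (1 : Matrix (Fin d) (Fin d) ℂ) := by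
  obtain ⟨q, hq⟩ := hD
  set Dl := subblock 0 0 d e D
  have hDsplit : D = place 0 0 Dl + place 0 e (q : Matrix (Fin d) (Fin d) ℂ) := by
    rw [hq]
    exact eq_place_add_place_cols hn D
  refine ⟨place 0 0 (1 : Matrix (Fin e) (Fin e) ℂ)
      + place e 0 (-((↑q⁻¹ : Matrix (Fin d) (Fin d) ℂ) * Dl)) + place e e (↑q⁻¹ : Matrix _ _ ℂ),
    (isUnit_place_lower_iff hn).mpr ⟨isUnit_one, q⁻¹.isUnit⟩, ?_⟩
  rw [hDsplit]
  simp (disch := omega) only [Matrix.add_mul, Matrix.mul_add, place_mul_place,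
    place_mul_place_of_disjoint, Matrix.mul_one, add_zero, zero_add, Matrix.mul_neg, place_neg]
  rw [← Matrix.mul_assoc, Units.mul_inv, Matrix.one_mul]
  abel

lemma exists_pairEquiv_idTop_normalForm {m n d e : ℕ} (hm : n + d = m) (hn : e + d = n)
    {C : Matrix (Fin m) (Fin n) ℂ} (hC : IsUnit (subblock n e d d C)) :
    ∃ (N₁ : Matrix (Fin n) (Fin e) ℂ) (N₂ : Matrix (Fin n) (Fin d) ℂ),
      PairEquiv (idTop m n) C (idTop m n)
        (place 0 0 N₁ + place 0 e N₂ + place n e (1 : Matrix (Fin d) (Fin d) ℂ)) := by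
  set D := subblock n 0 d n C
  obtain ⟨Y, ⟨y, hy⟩, hDY⟩ := exists_isUnit_mul_eq_place_one hn (D := D) (by
    rwa [subblock_subblock n 0 (show 0 + d ≤ d by omega) (show e + d ≤ n by omega),
      Nat.add_zero, Nat.zero_add])
  set R : Matrix (Fin m) (Fin m) ℂ :=
    place 0 0 (↑y⁻¹ : Matrix (Fin n) (Fin n) ℂ) + place n n (1 : Matrix (Fin d) (Fin d) ℂ)
  have hR : IsUnit R := by
    have h := (isUnit_place_lower_iff (Q := 0) hm).mpr ⟨y⁻¹.isUnit, isUnit_one⟩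
    rwa [place_zero, add_zero] at h
  set N := (↑y⁻¹ : Matrix (Fin n) (Fin n) ℂ) * subblock 0 0 n n C * Y
  refine ⟨subblock 0 0 n e N, subblock 0 e n d N, R, Y, hR, ⟨y, hy⟩, ?_, ?_⟩
  · simp (disch := omega) only [R, idTop, Matrix.add_mul, place_mul_place,
      place_mul_place_of_disjoint, add_zero, Matrix.mul_one, place_mul, ← hy, Units.inv_mul]
  · calc place 0 0 (subblock 0 0 n e N) + place 0 e (subblock 0 e n d N)
          + place n e (1 : Matrix (Fin d) (Fin d) ℂ)
        = place 0 0 N + place n 0 (D * Y) := by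
          rw [hDY, place_place n 0 (by omega) (by omega), eq_place_add_place_cols hn N,
            place_add, place_place 0 0 (by omega) (by omega),
            place_place 0 0 (by omega) (by omega), ← eq_place_add_place_cols hn N]
          simp only [Nat.add_zero, Nat.zero_add]
      _ = R * C * Y := by
          conv_rhs => rw [eq_place_add_place_rows hm C]
          simp (disch := omega) only [R, N, Matrix.add_mul, Matrix.mul_add, place_mul_place,
            place_mul_place_of_disjoint, add_zero, zero_add, Matrix.one_mul, place_mul,
            Matrix.mul_assoc]
          rfl

lemma eq_place_upper_of_mul_idTop {n d e : ℕ} (hn : e + d = n) {R : Matrix (Fin n) (Fin n) ℂ}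
    {T : Matrix (Fin e) (Fin e) ℂ} (h : R * idTop n e = place 0 0 T) :
    R = place 0 0 T + place 0 e (subblock 0 e e d R) + place e e (subblock e e d d R) := by
  have hright : subblock 0 e n d R =
      place 0 0 (subblock 0 e e d R) + place e 0 (subblock e e d d R) := by
    rw [eq_place_add_place_rows hn (subblock 0 e n d R),
      subblock_subblock 0 e (show 0 + e ≤ n by omega) (show 0 + d ≤ d by omega),
      subblock_subblock 0 e (show e + d ≤ n by omega) (show 0 + d ≤ d by omega)]
    simp only [Nat.add_zero, Nat.zero_add]
  conv_lhs => rw [eq_place_add_place_cols hn R]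
  rw [← mul_place_one_eq_subblock, ← idTop, h, place_place 0 0 (by omega) (by omega), hright,
    place_add, place_place 0 e (by omega) (by omega), place_place 0 e (by omega) (by omega),
    add_assoc]
  simp only [Nat.add_zero, Nat.zero_add]

lemma pairEquiv_idTop_normalForm_of_pairEquiv {m n d e : ℕ} (hm : n + d = m) (hn : e + d = n)
    {N₁ : Matrix (Fin n) (Fin e) ℂ} (hN₁ : PairEquiv (idTop n e) N₁ (idTop n e) (idBot n e))
    (N₂ : Matrix (Fin n) (Fin d) ℂ) :
    PairEquiv (idTop m n)
      (place 0 0 N₁ + place 0 e N₂ + place n e (1 : Matrix (Fin d) (Fin d) ℂ))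
      (idTop m n) (idBot m n) := by
  obtain ⟨R, T, hR, -, h₁, h₂⟩ := pairEquiv_iff_exists_mul_eq_mul.mp hN₁
  rw [idTop, place_mul, Matrix.one_mul] at h₁
  rw [idBot, show n - e = d by omega, place_mul, Matrix.one_mul] at h₂
  have hRblocks := eq_place_upper_of_mul_idTop hn h₁
  set A₁₂ := subblock 0 e e d R
  set A₂₂ := subblock e e d d R
  have hA₂₂ : IsUnit A₂₂ := by
    rw [hRblocks] at hR
    exact ((isUnit_place_upper_iff hn).mp hR).2
  set W : Matrix (Fin m) (Fin m) ℂ :=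
    place 0 0 R + place 0 n (place d 0 A₁₂ - R * N₂) + place n n A₂₂
  refine pairEquiv_iff_exists_mul_eq_mul.mpr
    ⟨W, R, (isUnit_place_upper_iff hm).mpr ⟨hR, hA₂₂⟩, hR, ?_, ?_⟩
  · simp (disch := omega) only [W, idTop, Matrix.add_mul, place_mul_place,
      place_mul_place_of_disjoint, Matrix.mul_one, add_zero, place_mul, Matrix.one_mul]
  · conv_rhs => rw [idBot, show m - n = d by omega, place_mul, Matrix.one_mul, hRblocks]
    simp (disch := omega) only [W, Matrix.add_mul, Matrix.sub_mul, Matrix.mul_add,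
      place_mul_place, place_mul_place_of_disjoint, Matrix.mul_one, add_zero, zero_add, h₂,
      place_add, place_sub, place_place]
    rw [show d + e = n by omega]
    abel

open Filter Topology

lemma dense_setOf_isUnit_subblock {M N k r c : ℕ} (h₁ : r + k ≤ M) (h₂ : c + k ≤ N) :
    Dense {C : Matrix (Fin M) (Fin N) ℂ | IsUnit (subblock r c k k C)} := by
  intro C
  have hlim : Tendsto (fun t : ℂ => C + t • place r c (1 : Matrix (Fin k) (Fin k) ℂ))
      (𝓝[≠] 0) (𝓝 C) := by
    have hcont : Continuous fun t : ℂ => C + t • place r c (1 : Matrix (Fin k) (Fin k) ℂ) := by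
      fun_prop
    simpa using (hcont.tendsto 0).mono_left nhdsWithin_le_nhds
  apply mem_closure_of_tendsto hlim
  filter_upwards [(Matrix.finite_spectrum (-subblock r c k k C)).eventually_cofinite_notMem
    |>.filter_mono (nhdsNE_le_cofinite 0)] with t ht
  rw [spectrum.mem_iff, not_not, Algebra.algebraMap_eq_smul_one, sub_neg_eq_add, add_comm] at ht
  simpa only [subblock_add, subblock_smul, subblock_place_self h₁ h₂] using ht

lemma dense_setOf_pairEquiv_idTop {m n : ℕ} (h : n < m) :
    Dense {C : Matrix (Fin m) (Fin n) ℂ | PairEquiv (idTop m n) C (idTop m n) (idBot m n)} := by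
  induction n using Nat.strong_induction_on generalizing m with
  | _ n ih =>
  obtain ⟨d, rfl⟩ : ∃ d, m = n + d := ⟨m - n, by omega⟩
  by_cases hnd : n ≤ d
  · exact (dense_setOf_isUnit_subblock (M := n + d) (N := n) (r := d) (c := 0) (k := n)
      (by omega) (by omega)).mono fun C hC => pairEquiv_idTop_of_isUnit_subblock rfl hnd hC
  obtain ⟨e, rfl⟩ : ∃ e, n = e + d := ⟨n - d, by omega⟩
  refine ((dense_setOf_isUnit_subblock (r := e + d) (c := e) (k := d) le_rfl le_rfl).mono
    fun C hC => ?_).of_closure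
  obtain ⟨N₁, N₂, hC⟩ := exists_pairEquiv_idTop_normalForm rfl rfl hC
  obtain ⟨R, S, hR, hS, hP, rfl⟩ := hC.symm
  have hf : Continuous fun N : Matrix (Fin (e + d)) (Fin e) ℂ =>
      R * (place 0 0 N + place 0 e N₂ + place (e + d) e (1 : Matrix (Fin d) (Fin d) ℂ) :
        Matrix (Fin (e + d + d)) (Fin (e + d)) ℂ) * S := by
    have := continuous_place (M := e + d + d) (N := e + d) (a := e + d) (b := e) 0 0
    fun_prop
  refine closure_mono ?_ (hf.range_subset_closure_image_dense (ih e (by omega) (by omega))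
    ⟨N₁, rfl⟩)
  rintro _ ⟨N, hN, rfl⟩
  exact (show PairEquiv _ _ _ _ from ⟨R, S, hR, hS, hP, rfl⟩).symm.trans
    (pairEquiv_idTop_normalForm_of_pairEquiv rfl rfl hN N₂)

lemma dense_setOf_pairEquiv {m n : ℕ} (h : n < m) :
    Dense {p : Matrix (Fin m) (Fin n) ℂ × Matrix (Fin m) (Fin n) ℂ |
      PairEquiv p.1 p.2 (idTop m n) (idBot m n)} := by
  obtain ⟨d, rfl⟩ : ∃ d, m = n + d := ⟨m - n, by omega⟩
  have hU := (dense_setOf_isUnit_subblock (M := n + d) (N := n) (r := 0) (c := 0) (k := n)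
    (by omega) (by omega)).prod (dense_univ (X := Matrix (Fin (n + d)) (Fin n) ℂ))
  refine (hU.mono ?_).of_closure
  rintro ⟨A, B⟩ ⟨hA, -⟩
  set M : Matrix (Fin (n + d)) (Fin (n + d)) ℂ :=
    place 0 0 A + place n n (1 : Matrix (Fin d) (Fin d) ℂ)
  obtain ⟨u, hu⟩ : IsUnit M := by
    have hsplit : (place 0 0 A : Matrix (Fin (n + d)) (Fin (n + d)) ℂ) =
        place 0 0 (subblock 0 0 n n A) + place n 0 (subblock n 0 d n A) := by
      conv_lhs => rw [eq_place_add_place_rows rfl A]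
      rw [place_add, place_place 0 0 (by omega) (by omega), place_place 0 0 (by omega) (by omega)]
      simp only [Nat.add_zero, Nat.zero_add]
    simp only [M, hsplit]
    exact (isUnit_place_lower_iff rfl).mpr ⟨hA, isUnit_one⟩
  have hMA : M * idTop (n + d) n = A := by
    simp (disch := omega) only [M, idTop, Matrix.add_mul, place_mul_place,
      place_mul_place_of_disjoint, Matrix.mul_one, add_zero, place_zero_zero_self]
  have hg : Continuous fun C : Matrix (Fin (n + d)) (Fin n) ℂ => (A, M * C) := by fun_prop
  refine closure_mono ?_ (hg.range_subset_closure_image_dense (dense_setOf_pairEquiv_idTop h)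
    ⟨(↑u⁻¹ : Matrix (Fin (n + d)) (Fin (n + d)) ℂ) * B, ?_⟩)
  · rintro _ ⟨C, hC, rfl⟩
    exact (pairEquiv_iff_exists_mul_eq_mul.mpr ⟨M, 1, ⟨u, hu⟩, isUnit_one,
      by rw [hMA, Matrix.mul_one], (Matrix.mul_one _).symm⟩).symm.trans hC
  · simp only [← hu, ← Matrix.mul_assoc, Units.mul_inv, Matrix.one_mul]

attribute [local instance] Matrix.normedAddCommGroup

theorem generic_pencil_tall (m n : ℕ) (hmn : m > n) (A B : Matrix (Fin m) (Fin n) ℂ)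
    (ε : ℝ) (hε : 0 < ε) :
    ∃ A' B' : Matrix (Fin m) (Fin n) ℂ,
      (∀ i j, ‖A i j - A' i j‖ < ε) ∧
      (∀ i j, ‖B i j - B' i j‖ < ε) ∧
      PairEquiv A' B'
        (place 0 0 (1 : Matrix (Fin n) (Fin n) ℂ))
        (place (m - n) 0 (1 : Matrix (Fin n) (Fin n) ℂ)) := by
  obtain ⟨⟨A', B'⟩, hequiv, hdist⟩ := (dense_setOf_pairEquiv hmn).exists_dist_lt (A, B) hε
  rw [Prod.dist_eq, max_lt_iff, dist_eq_norm, dist_eq_norm, Matrix.norm_lt_iff hε,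
    Matrix.norm_lt_iff hε] at hdist
  exact ⟨A', B', hdist.1, hdist.2, hequiv⟩
end
end

section
/- Let r ≥ 1, let λ be a complex number, and let β be a nonzero complex number. Then the pair of (r+1)×r complex matrices ([1] ⊕ F_r, ([λ] ⊕ K_r) + β·E_{2,1}), where [1] and [λ] are 1×1 blocks, is equivalent to the pair (F_{r+1}, K_{r+1}). -/
open Matrix

noncomputable section

theorem bif_tri_r_lambda (r : ℕ) (hr : 1 ≤ r) (lam β : ℂ) (hβ : β ≠ 0) :
    PairEquiv
      (place 0 0 !![(1 : ℂ)] + place 1 1 (MatF r) :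
        Matrix (Fin (r + 1)) (Fin r) ℂ)
      (place 0 0 !![lam] + place 1 1 (MatK r) + β • Estd 2 1)
      (MatF (r + 1))
      (MatK (r + 1)) := by
  classical
  set A1 : Matrix (Fin (r + 1)) (Fin r) ℂ :=
    place 0 0 !![(1 : ℂ)] + place 1 1 (MatF r) with hA1def
  set A2 : Matrix (Fin (r + 1)) (Fin r) ℂ :=
    place 0 0 !![lam] + place 1 1 (MatK r) + β • Estd 2 1 with hA2def
  set Wv : ℕ → ℕ → ℂ :=
    fun k i => if k = 0 then lam ^ i else if k ≤ i then β * lam ^ (i - k) else 0 with hWv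
  set W1 : Matrix (Fin (r + 1)) (Fin (r + 1)) ℂ := Matrix.of fun k i => Wv k i with hW1
  set W2 : Matrix (Fin r) (Fin r) ℂ := Matrix.of fun k i => Wv k i with hW2
  -- entries of the placed blocks
  have hp1 : ∀ (c : ℂ) (k : Fin (r + 1)) (i : Fin r),
      (place 0 0 !![c] : Matrix (Fin (r + 1)) (Fin r) ℂ) k i
        = if (k : ℕ) = 0 ∧ (i : ℕ) = 0 then c else 0 := by
    intro c k i
    simp only [place]
    split_ifs <;>
      first | rfl | (exfalso; first | exact absurd rfl ‹_› | exact ‹False› | omega) | (simp [Matrix.cons_val_fin_one])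
  have hpF : ∀ (k : Fin (r + 1)) (i : Fin r),
      (place 1 1 (MatF r) : Matrix (Fin (r + 1)) (Fin r) ℂ) k i
        = if (k : ℕ) = (i : ℕ) ∧ 1 ≤ (k : ℕ) then 1 else 0 := by
    intro k i
    simp only [place, MatF]
    split_ifs <;> first | rfl | (exfalso; first | exact absurd rfl ‹_› | exact ‹False› | omega)
  have hpK : ∀ (k : Fin (r + 1)) (i : Fin r),
      (place 1 1 (MatK r) : Matrix (Fin (r + 1)) (Fin r) ℂ) k i
        = if (k : ℕ) = (i : ℕ) + 1 ∧ 1 ≤ (i : ℕ) then 1 else 0 := by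
    intro k i
    simp only [place, MatK]
    split_ifs <;> first | rfl | (exfalso; first | exact absurd rfl ‹_› | exact ‹False› | omega)
  have hpE : ∀ (k : Fin (r + 1)) (i : Fin r),
      (β • Estd 2 1 : Matrix (Fin (r + 1)) (Fin r) ℂ) k i
        = if (k : ℕ) = 1 ∧ (i : ℕ) = 0 then β else 0 := by
    intro k i
    simp only [Matrix.smul_apply, Estd, smul_eq_mul]
    split_ifs <;> first | (exfalso; first | exact absurd rfl ‹_› | exact ‹False› | omega) | ring1
  -- entries of A1, A2
  have hA1 : ∀ (k : Fin (r + 1)) (i : Fin r),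
      A1 k i = if (k : ℕ) = (i : ℕ) then 1 else 0 := by
    intro k i
    rw [hA1def, Matrix.add_apply, hp1, hpF]
    split_ifs <;> first | (exfalso; first | exact absurd rfl ‹_› | exact ‹False› | omega) | ring1
  have hA2 : ∀ (k : Fin (r + 1)) (i : Fin r),
      A2 k i = if (i : ℕ) = 0 then
          (if (k : ℕ) = 0 then lam else if (k : ℕ) = 1 then β else 0)
        else if (k : ℕ) = (i : ℕ) + 1 then 1 else 0 := by
    intro k i
    rw [hA2def, Matrix.add_apply, Matrix.add_apply, hp1, hpK, hpE]
    split_ifs <;> first | (exfalso; first | exact absurd rfl ‹_› | exact ‹False› | omega) | ring1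
  -- Wv recurrences
  have hrec0 : ∀ j : ℕ, lam * Wv 0 j = Wv 0 (j + 1) := by
    intro j
    simp only [hWv]
    split_ifs <;> first | (exfalso; first | exact absurd rfl ‹_› | exact ‹False› | omega) | (rw [pow_succ]; ring)
  have hrec1 : ∀ j : ℕ, β * Wv 0 j = Wv 1 (j + 1) := by
    intro j
    simp only [hWv]
    split_ifs <;> first | (exfalso; first | exact absurd rfl ‹_› | exact ‹False› | omega) | (rw [Nat.add_sub_cancel])
  have hrec2 : ∀ kk jj : ℕ, 1 ≤ kk → Wv kk jj = Wv (kk + 1) (jj + 1) := by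
    intro kk jj hkk
    have he : jj - kk = jj + 1 - (kk + 1) := by omega
    simp only [hWv]
    split_ifs <;> first | (exfalso; first | exact absurd rfl ‹_› | exact ‹False› | omega) | rfl | (rw [he])
  -- W1, W2 invertible
  have hdetW : ∀ m, IsUnit (Matrix.of fun a b : Fin m => Wv a b).det := by
    intro m
    have htri : (Matrix.of fun a b : Fin m => Wv a b).BlockTriangular id := by
      intro i j hij
      have hij' : (j : ℕ) < (i : ℕ) := hij
      simp only [Matrix.of_apply, hWv]
      rw [if_neg (by omega), if_neg (by omega)]
    rw [Matrix.det_of_upperTriangular htri, isUnit_iff_ne_zero, Finset.prod_ne_zero_iff]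
    intro k _
    simp only [Matrix.of_apply, hWv]
    split_ifs with h1 h2
    · rw [h1, pow_zero]
      exact one_ne_zero
    · simpa using hβ
    · omega
  have hW1u : IsUnit W1.det := hdetW (r + 1)
  have hW2u : IsUnit W2 := (Matrix.isUnit_iff_isUnit_det _).2 (hdetW r)
  -- key identity 1 : W1 * MatF (r+1) = A1 * W2
  have key1 : W1 * MatF (r + 1) = A1 * W2 := by
    ext k j
    have hj : (j : ℕ) < r := j.isLt
    have hj1 : (j : ℕ) < r + 1 := by omega
    rw [Matrix.mul_apply, Matrix.mul_apply]
    have hL : (∑ i : Fin (r + 1), W1 k i * MatF (r + 1) i j) = Wv (k : ℕ) (j : ℕ) := by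
      rw [Finset.sum_eq_single (⟨(j : ℕ), hj1⟩ : Fin (r + 1))
        (fun b _ hb => ?_) (fun h => absurd (Finset.mem_univ _) h)]
      · have hval : MatF (r + 1) (⟨(j : ℕ), hj1⟩ : Fin (r + 1)) j = 1 := if_pos rfl
        rw [hval, mul_one]
        rfl
      · have hb' : (b : ℕ) ≠ (j : ℕ) := fun h => hb (Fin.ext h)
        have hval : MatF (r + 1) b j = 0 := if_neg hb'
        rw [hval, mul_zero]
    have hR : (∑ i : Fin r, A1 k i * W2 i j) = Wv (k : ℕ) (j : ℕ) := by
      by_cases hk : (k : ℕ) < r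
      · rw [Finset.sum_eq_single (⟨(k : ℕ), hk⟩ : Fin r)
          (fun b _ hb => ?_) (fun h => absurd (Finset.mem_univ _) h)]
        · have hval : A1 k (⟨(k : ℕ), hk⟩ : Fin r) = 1 := by
            rw [hA1]; exact if_pos rfl
          rw [hval, one_mul]
          rfl
        · have hb' : (k : ℕ) ≠ (b : ℕ) := fun h => hb (Fin.ext h.symm)
          rw [hA1, if_neg hb', zero_mul]
      · have hk' : (k : ℕ) = r := by have := k.isLt; omega
        rw [Finset.sum_eq_zero (fun i _ => ?_)]
        · symm
          simp only [hWv]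
          rw [if_neg (by omega), if_neg (by omega)]
        · rw [hA1, if_neg (by have := i.isLt; omega), zero_mul]
    rw [hL, hR]
  -- key identity 2 : W1 * MatK (r+1) = A2 * W2
  have key2 : W1 * MatK (r + 1) = A2 * W2 := by
    ext k j
    have hj : (j : ℕ) < r := j.isLt
    have hj1 : (j : ℕ) + 1 < r + 1 := by omega
    have h0r : (0 : ℕ) < r := by omega
    rw [Matrix.mul_apply, Matrix.mul_apply]
    have hL : (∑ i : Fin (r + 1), W1 k i * MatK (r + 1) i j)
        = Wv (k : ℕ) ((j : ℕ) + 1) := by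
      rw [Finset.sum_eq_single (⟨(j : ℕ) + 1, hj1⟩ : Fin (r + 1))
        (fun b _ hb => ?_) (fun h => absurd (Finset.mem_univ _) h)]
      · have hval : MatK (r + 1) (⟨(j : ℕ) + 1, hj1⟩ : Fin (r + 1)) j = 1 := if_pos rfl
        rw [hval, mul_one]
        rfl
      · have hb' : (b : ℕ) ≠ (j : ℕ) + 1 := fun h => hb (Fin.ext h)
        have hval : MatK (r + 1) b j = 0 := if_neg hb'
        rw [hval, mul_zero]
    have hR : (∑ i : Fin r, A2 k i * W2 i j) = Wv (k : ℕ) ((j : ℕ) + 1) := by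
      rcases Nat.lt_or_ge (k : ℕ) 2 with hk2 | hk2
      · rcases Nat.eq_zero_or_pos (k : ℕ) with hk | hk
        · -- k = 0
          rw [Finset.sum_eq_single (⟨0, h0r⟩ : Fin r)
            (fun b _ hb => ?_) (fun h => absurd (Finset.mem_univ _) h)]
          · have hval : A2 k (⟨0, h0r⟩ : Fin r) = lam := by
              rw [hA2]; exact (if_pos rfl).trans (if_pos hk)
            rw [hval, hk]
            exact hrec0 (j : ℕ)
          · have hb' : (b : ℕ) ≠ 0 := fun h => hb (Fin.ext h)
            rw [hA2, if_neg hb', if_neg (by omega), zero_mul]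
        · -- k = 1
          have hk1 : (k : ℕ) = 1 := by omega
          rw [Finset.sum_eq_single (⟨0, h0r⟩ : Fin r)
            (fun b _ hb => ?_) (fun h => absurd (Finset.mem_univ _) h)]
          · have hval : A2 k (⟨0, h0r⟩ : Fin r) = β := by
              rw [hA2]
              exact (if_pos rfl).trans ((if_neg (by omega)).trans (if_pos hk1))
            rw [hval, hk1]
            exact hrec1 (j : ℕ)
          · have hb' : (b : ℕ) ≠ 0 := fun h => hb (Fin.ext h)
            rw [hA2, if_neg hb', if_neg (by omega), zero_mul]
      · -- k ≥ 2
        have hkm : (k : ℕ) - 1 < r := by have := k.isLt; omega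
        rw [Finset.sum_eq_single (⟨(k : ℕ) - 1, hkm⟩ : Fin r)
          (fun b _ hb => ?_) (fun h => absurd (Finset.mem_univ _) h)]
        · have hval : A2 k (⟨(k : ℕ) - 1, hkm⟩ : Fin r) = 1 := by
            rw [hA2]
            exact (if_neg (show ¬((k : ℕ) - 1 = 0) by omega)).trans
              (if_pos (show (k : ℕ) = (k : ℕ) - 1 + 1 by omega))
          rw [hval, one_mul]
          have hstep : Wv ((k : ℕ) - 1) (j : ℕ)
              = Wv ((k : ℕ) - 1 + 1) ((j : ℕ) + 1) := hrec2 _ _ (by omega)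
          have he : (k : ℕ) - 1 + 1 = (k : ℕ) := by omega
          exact hstep.trans (by rw [he])
        · have hb' : (b : ℕ) ≠ (k : ℕ) - 1 := fun h => hb (Fin.ext h)
          rw [hA2]
          by_cases h0 : (b : ℕ) = 0
          · rw [if_pos h0, if_neg (by omega), if_neg (by omega), zero_mul]
          · rw [if_neg h0, if_neg (by omega), zero_mul]
    rw [hL, hR]
  -- assemble
  refine ⟨W1⁻¹, W2, ?_, hW2u, ?_, ?_⟩
  · exact Matrix.isUnit_nonsing_inv_iff.2 ((Matrix.isUnit_iff_isUnit_det _).2 hW1u)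
  · rw [Matrix.mul_assoc, ← key1, ← Matrix.mul_assoc, Matrix.nonsing_inv_mul _ hW1u,
      Matrix.one_mul]
  · rw [Matrix.mul_assoc, ← key2, ← Matrix.mul_assoc, Matrix.nonsing_inv_mul _ hW1u,
      Matrix.one_mul]
end
end

section
/- Let r ≥ 1 and let β be a nonzero complex number. Then the pair of (r+1)×r complex matrices ((F_r ⊕ [0]) + β·E_{r,r}, K_r ⊕ [1]), where [0] and [1] are 1×1 blocks, is equivalent to the pair (F_{r+1}, K_{r+1}). -/
open Matrix

noncomputable section

/-!
`K_r ⊕ [1]` is `K_{r+1}`, and `(F_r ⊕ [0]) + β E_{r,r}` is `F_{r+1}` with its `(r, r)` entry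
replaced by `β`, i.e. `F_{r+1} · diag(1, …, 1, β)`. Scaling the last column by `β⁻¹`
turns it into `F_{r+1}` and leaves a `β⁻¹` in the only nonzero entry of that column of
`K_{r+1}`, in its last row; scaling the last row by `β` removes it without changing `F_{r+1}`,
whose last row is zero.
-/

/-- Indices are 0-based, unlike those of `Estd`. -/
def scaleAt {n : ℕ} (k : ℕ) (c : ℂ) : Matrix (Fin n) (Fin n) ℂ :=
  diagonal fun i => if (i : ℕ) = k then c else 1

lemma isUnit_scaleAt {n k : ℕ} {c : ℂ} (hc : c ≠ 0) :
    IsUnit (scaleAt k c : Matrix (Fin n) (Fin n) ℂ) := by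
  rw [scaleAt, isUnit_diagonal, Pi.isUnit_iff]
  intro i
  split_ifs
  · exact hc.isUnit
  · exact isUnit_one

lemma scaleAt_mul_scaleAt_inv {n k : ℕ} {c : ℂ} (hc : c ≠ 0) :
    (scaleAt k c * scaleAt k c⁻¹ : Matrix (Fin n) (Fin n) ℂ) = 1 := by
  rw [scaleAt, scaleAt, diagonal_mul_diagonal, ← diagonal_one]
  congr 1
  ext i
  split_ifs <;> simp [hc]

lemma scaleAt_mul_MatF (n : ℕ) (c : ℂ) :
    (scaleAt n c : Matrix (Fin (n + 1)) (Fin (n + 1)) ℂ) * MatF (n + 1) = MatF (n + 1) := by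
  ext i j
  rw [scaleAt, diagonal_mul, MatF]
  split_ifs <;> first | omega | simp

lemma scaleAt_mul_MatK_mul_scaleAt_inv (n : ℕ) {c : ℂ} (hc : c ≠ 0) :
    (scaleAt n c : Matrix (Fin (n + 1)) (Fin (n + 1)) ℂ) * MatK (n + 1) *
      (scaleAt (n - 1) c⁻¹ : Matrix (Fin (n + 1 - 1)) (Fin (n + 1 - 1)) ℂ) = MatK (n + 1) := by
  ext i j
  rw [scaleAt, scaleAt, mul_diagonal, diagonal_mul, MatK]
  split_ifs <;> first | omega | simp [hc]

lemma place_MatF_add_place_zero_add_smul_Estd (r : ℕ) (β : ℂ) :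
    (place 0 0 (MatF r) + place r (r - 1) !![(0 : ℂ)] + β • Estd r r :
        Matrix (Fin (r + 1)) (Fin r) ℂ) =
      MatF (r + 1) * (scaleAt (r - 1) β : Matrix (Fin (r + 1 - 1)) (Fin (r + 1 - 1)) ℂ) := by
  ext i j
  rw [scaleAt, mul_diagonal]
  simp only [Matrix.add_apply, Matrix.smul_apply, smul_eq_mul, place, MatF, Estd]
  split_ifs <;> first | omega | simp

lemma place_MatK_add_place_one (r : ℕ) :
    (place 0 0 (MatK r) + place r (r - 1) !![(1 : ℂ)] : Matrix (Fin (r + 1)) (Fin r) ℂ) =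
      MatK (r + 1) := by
  ext i j
  simp only [Matrix.add_apply, place, MatK]
  split_ifs <;> first | omega | simp

theorem bif_tri_r_infty_general (r : ℕ) (β : ℂ) (hβ : β ≠ 0) :
    PairEquiv
      (place 0 0 (MatF r) + place r (r - 1) !![(0 : ℂ)] + β • Estd r r :
        Matrix (Fin (r + 1)) (Fin r) ℂ)
      (place 0 0 (MatK r) + place r (r - 1) !![(1 : ℂ)])
      (MatF (r + 1))
      (MatK (r + 1)) := by
  refine ⟨scaleAt r β, scaleAt (r - 1) β⁻¹, isUnit_scaleAt hβ, isUnit_scaleAt (inv_ne_zero hβ),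
    ?_, ?_⟩
  · rw [place_MatF_add_place_zero_add_smul_Estd, Matrix.mul_assoc, Matrix.mul_assoc,
      scaleAt_mul_scaleAt_inv hβ, Matrix.mul_one, scaleAt_mul_MatF]
  · rw [place_MatK_add_place_one]
    exact (scaleAt_mul_MatK_mul_scaleAt_inv r hβ).symm

theorem bif_tri_r_infty (r : ℕ) (hr : 1 ≤ r) (β : ℂ) (hβ : β ≠ 0) :
    PairEquiv
      (place 0 0 (MatF r) + place r (r - 1) !![(0 : ℂ)] + β • Estd r r :
        Matrix (Fin (r + 1)) (Fin r) ℂ)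
      (place 0 0 (MatK r) + place r (r - 1) !![(1 : ℂ)])
      (MatF (r + 1))
      (MatK (r + 1)) :=
  bif_tri_r_infty_general r β hβ
end
end

section
/- Let r ≥ 1 and let β, γ be complex numbers with (β, γ) ≠ (0, 0). Then the pair of (2r+3)×(2r+1) complex matrices (F_r ⊕ F_{r+3}, (K_r ⊕ K_{r+3}) + β·E_{1,r} + γ·E_{1,r+1}) is equivalent to the pair (F_{r+1} ⊕ F_{r+2}, K_{r+1} ⊕ K_{r+2}). -/
open Matrix

noncomputable section

/-!
Read a vector of length `a + b` as a pair of polynomials `(f, g)` with `deg f < a` and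
`deg g < b`. In these coordinates the pencil `(F_a ⊕ F_b, K_a ⊕ K_b)` acts as the identity and as
multiplication by `X`, and the perturbation `β E_{1,r} + γ E_{1,r+1}` adds `β g₀ + γ g₁` to the
constant term of `f`. Hence any injective linear map `Φ` of pairs of polynomials that takes the
degree bounds `(e, e + 3)` to `(e + 1, e + 2)` and turns this perturbed shift into
multiplication by `X` gives the equivalence: its matrices at `e = r` and `e = r - 1` are `R` and `S⁻¹`.

With `D = divX` and `(u₁, u₂) = Φ (f, g)`, such a `Φ` is
`(f, g) ↦ ((βX - γ) f + γ² D²g + β (β g₀ + γ g₁), -f + (βD + γD²) g)` when `β ≠ 0`,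
injective because `u₁ + (βX - γ) u₂ = β² g`, and
`(f, g) ↦ (-γ f + γ² D²g, -X² f - γ (g₀ + g₁ X))` when `β = 0`,
injective because `X² u₁ - γ u₂ = γ² g`.
-/

open Polynomial

namespace Polynomial

variable {R : Type*} [Semiring R] {n : ℕ} {f : R[X]}

theorem X_mul_mem_degreeLT (hf : f ∈ degreeLT R n) : X * f ∈ degreeLT R (n + 1) := by
  rw [mem_degreeLT, degree_lt_iff_coeff_zero] at hf ⊢
  intro m hm
  obtain ⟨k, rfl⟩ : ∃ k, m = k + 1 := ⟨m - 1, by omega⟩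
  rw [coeff_X_mul]
  exact hf k (by omega)

theorem divX_mem_degreeLT (hf : f ∈ degreeLT R (n + 1)) : divX f ∈ degreeLT R n := by
  rw [mem_degreeLT, degree_lt_iff_coeff_zero] at hf ⊢
  intro m hm
  rw [coeff_divX]
  exact hf (m + 1) (by omega)

theorem C_mul_mem_degreeLT (a : R) (hf : f ∈ degreeLT R n) : C a * f ∈ degreeLT R n := by
  rw [← smul_eq_C_mul]
  exact Submodule.smul_mem _ a hf

theorem C_mem_degreeLT_succ (a : R) : C a ∈ degreeLT R (n + 1) := by
  rw [← monomial_zero_left]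
  exact monomial_coe_mem_degreeLT (⟨0, n.succ_pos⟩ : Fin (n + 1)) a

theorem divX_X_mul (f : R[X]) : divX (X * f) = f := by
  ext k
  rw [coeff_divX, coeff_X_mul]

end Polynomial

section PolyPair

variable {R : Type*} [CommSemiring R] {N : ℕ}

def toPolyPair (a : ℕ) : (Fin N → R) →ₗ[R] R[X] × R[X] :=
  Fintype.linearCombination R fun i : Fin N =>
    if (i : ℕ) < a then (X ^ (i : ℕ), 0) else (0, X ^ ((i : ℕ) - a))

def ofPolyPair (a : ℕ) : R[X] × R[X] →ₗ[R] Fin N → R :=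
  LinearMap.pi fun i : Fin N =>
    if (i : ℕ) < a then lcoeff R i ∘ₗ LinearMap.fst R R[X] R[X]
    else lcoeff R ((i : ℕ) - a) ∘ₗ LinearMap.snd R R[X] R[X]

theorem ofPolyPair_apply (a : ℕ) (p : R[X] × R[X]) (i : Fin N) :
    ofPolyPair a p i = if (i : ℕ) < a then p.1.coeff i else p.2.coeff ((i : ℕ) - a) := by
  simp only [ofPolyPair, LinearMap.pi_apply]
  split_ifs <;> rfl

theorem toPolyPair_single (a : ℕ) (i : Fin N) (x : R) :
    toPolyPair a (Pi.single i x) =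
      if (i : ℕ) < a then (monomial i x, 0) else (0, monomial ((i : ℕ) - a) x) := by
  rw [toPolyPair, Fintype.linearCombination_apply_single]
  split_ifs <;> simp [smul_X_eq_monomial]

theorem coeff_toPolyPair_fst (a : ℕ) (v : Fin N → R) (k : ℕ) :
    (toPolyPair a v).1.coeff k = if h : k < a ∧ k < N then v ⟨k, h.2⟩ else 0 := by
  simp only [toPolyPair, Fintype.linearCombination_apply, Prod.fst_sum, finsetSum_coeff]
  split_ifs with h
  · rw [Finset.sum_eq_single ⟨k, h.2⟩ _ (by simp)]
    · simp [h.1]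
    · intro i _ hi
      have : (i : ℕ) ≠ k := fun h' => hi (Fin.ext h')
      split_ifs <;> simp only [Prod.smul_mk, smul_zero, coeff_smul, coeff_X_pow, coeff_zero,
        smul_eq_mul, mul_ite, mul_one, mul_zero, ite_eq_right_iff]
      all_goals omega
  · refine Finset.sum_eq_zero fun i _ => ?_
    split_ifs <;> simp only [Prod.smul_mk, smul_zero, coeff_smul, coeff_X_pow, coeff_zero,
      smul_eq_mul, mul_ite, mul_one, mul_zero, ite_eq_right_iff]
    all_goals omega

theorem coeff_toPolyPair_snd (a : ℕ) (v : Fin N → R) (k : ℕ) :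
    (toPolyPair a v).2.coeff k = if h : a + k < N then v ⟨a + k, h⟩ else 0 := by
  simp only [toPolyPair, Fintype.linearCombination_apply, Prod.snd_sum, finsetSum_coeff]
  split_ifs with h
  · rw [Finset.sum_eq_single ⟨a + k, h⟩ _ (by simp)]
    · simp
    · intro i _ hi
      have : (i : ℕ) ≠ a + k := fun h' => hi (Fin.ext h')
      split_ifs <;> simp only [Prod.smul_mk, smul_zero, coeff_smul, coeff_X_pow, coeff_zero,
        smul_eq_mul, mul_ite, mul_one, mul_zero, ite_eq_right_iff]
      all_goals omega
  · refine Finset.sum_eq_zero fun i _ => ?_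
    split_ifs <;> simp only [Prod.smul_mk, smul_zero, coeff_smul, coeff_X_pow, coeff_zero,
      smul_eq_mul, mul_ite, mul_one, mul_zero, ite_eq_right_iff]
    all_goals omega

theorem ofPolyPair_toPolyPair (a : ℕ) (v : Fin N → R) : ofPolyPair a (toPolyPair a v) = v := by
  funext i
  rw [ofPolyPair_apply, coeff_toPolyPair_fst, coeff_toPolyPair_snd]
  split_ifs <;> first | rfl | omega | (congr 1; ext; rw [Fin.val_mk]; omega)

theorem toPolyPair_injective (a : ℕ) : Function.Injective (toPolyPair a : (Fin N → R) → _) :=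
  Function.LeftInverse.injective (g := ofPolyPair a) (ofPolyPair_toPolyPair a)

theorem toPolyPair_mem_prod_degreeLT (a : ℕ) (v : Fin N → R) :
    toPolyPair a v ∈ (degreeLT R a).prod (degreeLT R (N - a)) := by
  refine ⟨?_, ?_⟩ <;> rw [SetLike.mem_coe, mem_degreeLT, degree_lt_iff_coeff_zero] <;>
    intro k hk
  · rw [coeff_toPolyPair_fst, dif_neg (by omega)]
  · rw [coeff_toPolyPair_snd, dif_neg (by omega)]

theorem toPolyPair_ofPolyPair {a : ℕ} (ha : a ≤ N) {p : R[X] × R[X]}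
    (hp : p ∈ (degreeLT R a).prod (degreeLT R (N - a))) :
    toPolyPair a (ofPolyPair a p : Fin N → R) = p := by
  obtain ⟨h₁, h₂⟩ := hp
  rw [SetLike.mem_coe, mem_degreeLT, degree_lt_iff_coeff_zero] at h₁ h₂
  ext k
  · simp only [coeff_toPolyPair_fst, ofPolyPair_apply]
    split_ifs with h h'
    · rfl
    · exact absurd h.1 h'
    · exact (h₁ k (by omega)).symm
  · simp only [coeff_toPolyPair_snd, ofPolyPair_apply]
    split_ifs with h h'
    · omega
    · simp
    · exact (h₂ k (by omega)).symm

def perturbedShift (β γ : R) : R[X] × R[X] →ₗ[R] R[X] × R[X] where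
  toFun p := (X * p.1 + C (β * p.2.coeff 0 + γ * p.2.coeff 1), X * p.2)
  map_add' p q := by
    simp only [Prod.fst_add, Prod.snd_add, coeff_add, mul_add, map_add, Prod.mk_add_mk]
    ring_nf
  map_smul' x p := by
    simp only [Prod.smul_fst, Prod.smul_snd, RingHom.id_apply, Prod.smul_mk, smul_eq_C_mul,
      coeff_C_mul, map_add, map_mul]
    ring_nf

@[simp]
theorem perturbedShift_apply (β γ : R) (p : R[X] × R[X]) :
    perturbedShift β γ p = (X * p.1 + C (β * p.2.coeff 0 + γ * p.2.coeff 1), X * p.2) := rfl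

end PolyPair

section PolyPairMatrix

variable {K : Type*} [Field K] {n e : ℕ} {Φ : K[X] × K[X] →ₗ[K] K[X] × K[X]}

def polyPairMatrix (Φ : K[X] × K[X] →ₗ[K] K[X] × K[X]) (e : ℕ) :
    Matrix (Fin n) (Fin n) K :=
  LinearMap.toMatrix' (ofPolyPair (e + 1) ∘ₗ Φ ∘ₗ toPolyPair e)

theorem toPolyPair_polyPairMatrix_mulVec (hn : n = 2 * e + 3)
    (hΦ : ∀ p ∈ (degreeLT K e).prod (degreeLT K (e + 3)),
      Φ p ∈ (degreeLT K (e + 1)).prod (degreeLT K (e + 2)))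
    (v : Fin n → K) :
    toPolyPair (e + 1) (polyPairMatrix Φ e *ᵥ v) = Φ (toPolyPair e v) := by
  have hv := toPolyPair_mem_prod_degreeLT e v
  rw [show n - e = e + 3 by omega] at hv
  rw [polyPairMatrix, LinearMap.toMatrix'_mulVec, LinearMap.comp_apply, LinearMap.comp_apply]
  refine toPolyPair_ofPolyPair (by omega) ?_
  rw [show n - (e + 1) = e + 2 by omega]
  exact hΦ _ hv

theorem isUnit_polyPairMatrix (hn : n = 2 * e + 3)
    (hΦ : ∀ p ∈ (degreeLT K e).prod (degreeLT K (e + 3)),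
      Φ p ∈ (degreeLT K (e + 1)).prod (degreeLT K (e + 2)))
    (hinj : Function.Injective Φ) :
    IsUnit (polyPairMatrix Φ e : Matrix (Fin n) (Fin n) K) :=
  Matrix.mulVec_injective_iff_isUnit.mp fun v w hvw => toPolyPair_injective e <| hinj <| by
    rw [← toPolyPair_polyPairMatrix_mulVec hn hΦ, ← toPolyPair_polyPairMatrix_mulVec hn hΦ, hvw]

theorem polyPairMatrix_mul_eq_mul_polyPairMatrix {m : ℕ} (hn : n = 2 * e + 3)
    (hm : m = 2 * e + 5)
    (hΦ : ∀ d, ∀ p ∈ (degreeLT K d).prod (degreeLT K (d + 3)),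
      Φ p ∈ (degreeLT K (d + 1)).prod (degreeLT K (d + 2)))
    {A B : Matrix (Fin m) (Fin n) K} {T T' : K[X] × K[X] → K[X] × K[X]}
    (hA : ∀ v, toPolyPair (e + 1) (A *ᵥ v) = T (toPolyPair e v))
    (hB : ∀ w, toPolyPair (e + 2) (B *ᵥ w) = T' (toPolyPair (e + 1) w))
    (hT : ∀ p, Φ (T p) = T' (Φ p)) :
    (polyPairMatrix Φ (e + 1) : Matrix (Fin m) (Fin m) K) * A =
      B * (polyPairMatrix Φ e : Matrix (Fin n) (Fin n) K) := by
  refine Matrix.ext_iff_mulVec.mpr fun v => toPolyPair_injective (e + 2) ?_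
  rw [← Matrix.mulVec_mulVec v, ← Matrix.mulVec_mulVec v, hB,
    toPolyPair_polyPairMatrix_mulVec (by omega) (hΦ _), hA, hT,
    toPolyPair_polyPairMatrix_mulVec hn (hΦ _)]

end PolyPairMatrix

section Pencil

variable {M N a b c : ℕ}

theorem col_MatF_directSum (hc : c + 1 = a) (hN : N + 1 = c + b) (hM : M = a + b)
    (j : Fin N) :
    (place 0 0 (MatF a) + place a c (MatF b) : Matrix (Fin M) (Fin N) ℂ).col j =
      Pi.single ⟨if (j : ℕ) < c then j else j + 1, by split_ifs <;> omega⟩ 1 := by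
  funext i
  simp only [Matrix.col_apply, Matrix.add_apply, place, MatF, Pi.single_apply, Fin.ext_iff]
  split_ifs <;> first | (exfalso; omega) | simp

theorem col_MatK_directSum (hc : c + 1 = a) (hN : N + 1 = c + b) (hM : M = a + b)
    (j : Fin N) :
    (place 0 0 (MatK a) + place a c (MatK b) : Matrix (Fin M) (Fin N) ℂ).col j =
      Pi.single ⟨if (j : ℕ) < c then j + 1 else j + 2, by split_ifs <;> omega⟩ 1 := by
  funext i
  simp only [Matrix.col_apply, Matrix.add_apply, place, MatK, Pi.single_apply, Fin.ext_iff]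
  split_ifs <;> first | (exfalso; omega) | simp

theorem col_smul_Estd_add_smul_Estd (β γ : ℂ) (hc : c + 1 = a) (hM : M = a + b) (j : Fin N) :
    (β • Estd 1 a + γ • Estd 1 (a + 1) : Matrix (Fin M) (Fin N) ℂ).col j =
      Pi.single ⟨0, by omega⟩
        ((if (j : ℕ) = c then β else 0) + if (j : ℕ) = c + 1 then γ else 0) := by
  funext i
  simp only [Matrix.col_apply, Matrix.add_apply, Matrix.smul_apply, Estd, Pi.single_apply,
    Fin.ext_iff, smul_eq_mul]
  split_ifs <;> first | (exfalso; omega) | simp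

theorem toPolyPair_MatF_directSum_mulVec (hc : c + 1 = a) (hN : N + 1 = c + b) (hM : M = a + b)
    (v : Fin N → ℂ) :
    toPolyPair a ((place 0 0 (MatF a) + place a c (MatF b) : Matrix (Fin M) (Fin N) ℂ) *ᵥ v) =
      toPolyPair c v := by
  suffices h : toPolyPair a ∘ₗ (place 0 0 (MatF a) + place a c (MatF b) :
      Matrix (Fin M) (Fin N) ℂ).mulVecLin = toPolyPair c from LinearMap.congr_fun h v
  ext j : 2
  simp only [LinearMap.comp_apply, LinearMap.single_apply, Matrix.mulVecLin_apply,
    Matrix.mulVec_single_one, col_MatF_directSum hc hN hM, toPolyPair_single]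
  split_ifs <;> first | rfl | (exfalso; omega) | (congr 3; omega)

theorem toPolyPair_MatK_directSum_mulVec (hc : c + 1 = a) (hN : N + 1 = c + b) (hM : M = a + b)
    (v : Fin N → ℂ) :
    toPolyPair a ((place 0 0 (MatK a) + place a c (MatK b) : Matrix (Fin M) (Fin N) ℂ) *ᵥ v) =
      (X : ℂ[X]) • toPolyPair c v := by
  suffices h : toPolyPair a ∘ₗ (place 0 0 (MatK a) + place a c (MatK b) :
      Matrix (Fin M) (Fin N) ℂ).mulVecLin = (X : ℂ[X]) • toPolyPair c from LinearMap.congr_fun h v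
  ext j : 2
  simp only [LinearMap.comp_apply, LinearMap.single_apply, Matrix.mulVecLin_apply,
    Matrix.mulVec_single_one, col_MatK_directSum hc hN hM, toPolyPair_single,
    LinearMap.smul_apply]
  split_ifs <;> first | (exfalso; omega) | skip
  · simp [X_mul_monomial]
  · rw [show (j : ℕ) + 2 - a = (j : ℕ) - c + 1 by omega]
    simp [X_mul_monomial]

theorem toPolyPair_perturbed_MatK_directSum_mulVec (β γ : ℂ) (hc : c + 1 = a)
    (hN : N + 1 = c + b) (hM : M = a + b) (v : Fin N → ℂ) :
    toPolyPair a ((place 0 0 (MatK a) + place a c (MatK b) + β • Estd 1 a + γ • Estd 1 (a + 1) :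
        Matrix (Fin M) (Fin N) ℂ) *ᵥ v) = perturbedShift β γ (toPolyPair c v) := by
  suffices h : toPolyPair a ∘ₗ (place 0 0 (MatK a) + place a c (MatK b) + β • Estd 1 a +
      γ • Estd 1 (a + 1) : Matrix (Fin M) (Fin N) ℂ).mulVecLin =
      perturbedShift β γ ∘ₗ toPolyPair c from LinearMap.congr_fun h v
  ext j : 2
  simp only [LinearMap.comp_apply, LinearMap.single_apply, Matrix.mulVecLin_apply]
  rw [add_assoc, Matrix.add_mulVec, Matrix.mulVec_single_one, Matrix.mulVec_single_one,
    col_MatK_directSum hc hN hM, col_smul_Estd_add_smul_Estd β γ hc hM, map_add,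
    toPolyPair_single, toPolyPair_single, toPolyPair_single]
  simp only [perturbedShift_apply]
  split_ifs <;> first | (exfalso; omega) | skip
  all_goals ext n <;> simp only [Prod.mk_add_mk, add_zero, zero_add, mul_zero, mul_ite, mul_one,
    monomial_zero_left, monomial_zero_right, X_mul_monomial, coeff_monomial, coeff_C, coeff_zero,
    coeff_add] <;> split_ifs <;> first | (exfalso; omega) | simp

end Pencil

theorem pairEquiv_of_mul_eq_mul {m n : ℕ} {A₁ A₂ B₁ B₂ : Matrix (Fin m) (Fin n) ℂ}
    {R : Matrix (Fin m) (Fin m) ℂ} {U : Matrix (Fin n) (Fin n) ℂ} (hR : IsUnit R) (hU : IsUnit U)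
    (h₁ : R * A₁ = B₁ * U) (h₂ : R * A₂ = B₂ * U) : PairEquiv A₁ A₂ B₁ B₂ := by
  obtain ⟨U, rfl⟩ := hU
  exact ⟨R, ↑U⁻¹, hR, U⁻¹.isUnit, by rw [h₁, Matrix.mul_assoc, Units.mul_inv, Matrix.mul_one],
    by rw [h₂, Matrix.mul_assoc, Units.mul_inv, Matrix.mul_one]⟩

theorem pairEquiv_of_intertwiner (r : ℕ) (hr : 1 ≤ r) (β γ : ℂ)
    (Φ : ℂ[X] × ℂ[X] →ₗ[ℂ] ℂ[X] × ℂ[X])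
    (hdeg : ∀ d, ∀ p ∈ (degreeLT ℂ d).prod (degreeLT ℂ (d + 3)),
      Φ p ∈ (degreeLT ℂ (d + 1)).prod (degreeLT ℂ (d + 2)))
    (hinj : Function.Injective Φ) (hshift : ∀ p, Φ (perturbedShift β γ p) = (X : ℂ[X]) • Φ p) :
    PairEquiv
      (place 0 0 (MatF r) + place r (r - 1) (MatF (r + 3)) :
        Matrix (Fin (2 * r + 3)) (Fin (2 * r + 1)) ℂ)
      (place 0 0 (MatK r) + place r (r - 1) (MatK (r + 3)) + β • Estd 1 r + γ • Estd 1 (r + 1))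
      (place 0 0 (MatF (r + 1)) + place (r + 1) r (MatF (r + 2)))
      (place 0 0 (MatK (r + 1)) + place (r + 1) r (MatK (r + 2))) := by
  obtain ⟨s, rfl⟩ : ∃ s, r = s + 1 := ⟨r - 1, by omega⟩
  refine pairEquiv_of_mul_eq_mul (isUnit_polyPairMatrix (e := s + 1) (by omega) (hdeg _) hinj)
    (isUnit_polyPairMatrix (e := s) (by omega) (hdeg _) hinj) ?_ ?_
  · refine polyPairMatrix_mul_eq_mul_polyPairMatrix (e := s) (T := id) (T' := id) (by omega)
      (by omega) hdeg (fun v => ?_) (fun w => ?_) fun _ => rfl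
    · exact toPolyPair_MatF_directSum_mulVec (by omega) (by omega) (by omega) v
    · exact toPolyPair_MatF_directSum_mulVec (by omega) (by omega) (by omega) w
  · refine polyPairMatrix_mul_eq_mul_polyPairMatrix (e := s) (T := perturbedShift β γ)
      (T' := ((X : ℂ[X]) • ·)) (by omega) (by omega) hdeg (fun v => ?_) (fun w => ?_) hshift
    · exact toPolyPair_perturbed_MatK_directSum_mulVec β γ (by omega) (by omega) (by omega) v
    · exact toPolyPair_MatK_directSum_mulVec (by omega) (by omega) (by omega) w

section Intertwiners

variable {R : Type*} [CommRing R]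

def intertwinerBeta (β γ : R) : R[X] × R[X] →ₗ[R] R[X] × R[X] where
  toFun p :=
    (C β * (X * p.1) - C γ * p.1 + C (γ ^ 2) * divX (divX p.2) +
        C (β * (β * p.2.coeff 0 + γ * p.2.coeff 1)),
      -p.1 + C β * divX p.2 + C γ * divX (divX p.2))
  map_add' p q := by
    simp only [Prod.fst_add, Prod.snd_add, divX_add, coeff_add, map_add, mul_add, Prod.mk_add_mk]
    ring_nf
  map_smul' x p := by
    simp only [Prod.smul_fst, Prod.smul_snd, RingHom.id_apply, Prod.smul_mk, smul_eq_C_mul,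
      divX_C_mul, coeff_C_mul, map_add, map_mul]
    ring_nf

@[simp]
theorem intertwinerBeta_apply (β γ : R) (p : R[X] × R[X]) :
    intertwinerBeta β γ p =
      (C β * (X * p.1) - C γ * p.1 + C (γ ^ 2) * divX (divX p.2) +
          C (β * (β * p.2.coeff 0 + γ * p.2.coeff 1)),
        -p.1 + C β * divX p.2 + C γ * divX (divX p.2)) := rfl

def intertwinerGamma (γ : R) : R[X] × R[X] →ₗ[R] R[X] × R[X] where
  toFun p :=
    (-(C γ * p.1) + C (γ ^ 2) * divX (divX p.2),
      -(X * (X * p.1)) - C γ * (C (p.2.coeff 0) + X * C (p.2.coeff 1)))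
  map_add' p q := by
    simp only [Prod.fst_add, Prod.snd_add, divX_add, coeff_add, map_add, mul_add, Prod.mk_add_mk]
    ring_nf
  map_smul' x p := by
    simp only [Prod.smul_fst, Prod.smul_snd, RingHom.id_apply, Prod.smul_mk, smul_eq_C_mul,
      divX_C_mul, coeff_C_mul, map_mul]
    ring_nf

@[simp]
theorem intertwinerGamma_apply (γ : R) (p : R[X] × R[X]) :
    intertwinerGamma γ p =
      (-(C γ * p.1) + C (γ ^ 2) * divX (divX p.2),
        -(X * (X * p.1)) - C γ * (C (p.2.coeff 0) + X * C (p.2.coeff 1))) := rfl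

theorem intertwinerBeta_mem_prod_degreeLT (β γ : R) (e : ℕ) :
    ∀ p ∈ (degreeLT R e).prod (degreeLT R (e + 3)),
      intertwinerBeta β γ p ∈ (degreeLT R (e + 1)).prod (degreeLT R (e + 2)) := by
  rintro ⟨f, g⟩ ⟨hf, hg⟩
  have hg₁ : divX g ∈ degreeLT R (e + 2) := divX_mem_degreeLT hg
  have hg₂ : divX (divX g) ∈ degreeLT R (e + 1) := divX_mem_degreeLT hg₁
  exact ⟨add_mem (add_mem (sub_mem (C_mul_mem_degreeLT _ (X_mul_mem_degreeLT hf))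
      (C_mul_mem_degreeLT _ (degreeLT_mono (by omega) hf))) (C_mul_mem_degreeLT _ hg₂))
      (C_mem_degreeLT_succ _),
    add_mem (add_mem (neg_mem (degreeLT_mono (by omega) hf)) (C_mul_mem_degreeLT _ hg₁))
      (C_mul_mem_degreeLT _ (degreeLT_mono (by omega) hg₂))⟩

theorem intertwinerGamma_mem_prod_degreeLT (γ : R) (e : ℕ) :
    ∀ p ∈ (degreeLT R e).prod (degreeLT R (e + 3)),
      intertwinerGamma γ p ∈ (degreeLT R (e + 1)).prod (degreeLT R (e + 2)) := by
  rintro ⟨f, g⟩ ⟨hf, hg⟩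
  exact ⟨add_mem (neg_mem (C_mul_mem_degreeLT _ (degreeLT_mono (by omega) hf)))
      (C_mul_mem_degreeLT _ (divX_mem_degreeLT (divX_mem_degreeLT hg))),
    sub_mem (neg_mem (X_mul_mem_degreeLT (X_mul_mem_degreeLT hf)))
      (C_mul_mem_degreeLT _ (add_mem (C_mem_degreeLT_succ _)
        (X_mul_mem_degreeLT (C_mem_degreeLT_succ _))))⟩

theorem intertwinerBeta_perturbedShift (β γ : R) (p : R[X] × R[X]) :
    intertwinerBeta β γ (perturbedShift β γ p) = (X : R[X]) • intertwinerBeta β γ p := by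
  obtain ⟨f, g⟩ := p
  have h₁ := X_mul_divX_add g
  have h₂ := X_mul_divX_add (divX g)
  rw [coeff_divX, zero_add] at h₂
  simp only [intertwinerBeta_apply, perturbedShift_apply, divX_X_mul,
    coeff_X_mul_zero, coeff_X_mul, Prod.smul_mk, smul_eq_mul, map_add, map_mul, map_pow, map_zero]
  refine Prod.ext ?_ ?_
  · linear_combination (-C γ ^ 2) * h₂
  · linear_combination (-C β) * h₁ - C γ * h₂

theorem intertwinerGamma_perturbedShift (γ : R) (p : R[X] × R[X]) :
    intertwinerGamma γ (perturbedShift 0 γ p) = (X : R[X]) • intertwinerGamma γ p := by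
  obtain ⟨f, g⟩ := p
  have h₂ := X_mul_divX_add (divX g)
  rw [coeff_divX, zero_add] at h₂
  simp only [intertwinerGamma_apply, perturbedShift_apply, divX_X_mul,
    coeff_X_mul_zero, coeff_X_mul, Prod.smul_mk, smul_eq_mul, map_add, map_mul, map_pow, map_zero]
  refine Prod.ext ?_ ?_
  · linear_combination (-C γ ^ 2) * h₂
  · ring

theorem intertwinerBeta_injective [IsDomain R] {β : R} (hβ : β ≠ 0) (γ : R) :
    Function.Injective (intertwinerBeta β γ) := by
  rw [← LinearMap.ker_eq_bot, LinearMap.ker_eq_bot']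
  rintro ⟨f, g⟩ h
  simp only [intertwinerBeta_apply, Prod.mk_eq_zero] at h
  obtain ⟨h₁, h₂⟩ := h
  have hg₁ := X_mul_divX_add g
  have hg₂ := X_mul_divX_add (divX g)
  rw [coeff_divX, zero_add] at hg₂
  simp only [map_add, map_mul, map_pow] at h₁
  have hg : C (β ^ 2) * g = 0 := by
    rw [map_pow]
    linear_combination h₁ + (C β * X - C γ) * h₂ - C β ^ 2 * hg₁ - C β * C γ * hg₂
  rw [mul_eq_zero, C_eq_zero] at hg
  obtain rfl := hg.resolve_left (pow_ne_zero 2 hβ)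
  simpa using h₂

theorem intertwinerGamma_injective [IsDomain R] {γ : R} (hγ : γ ≠ 0) :
    Function.Injective (intertwinerGamma γ) := by
  rw [← LinearMap.ker_eq_bot, LinearMap.ker_eq_bot']
  rintro ⟨f, g⟩ h
  simp only [intertwinerGamma_apply, Prod.mk_eq_zero] at h
  obtain ⟨h₁, h₂⟩ := h
  have hg₁ := X_mul_divX_add g
  have hg₂ := X_mul_divX_add (divX g)
  rw [coeff_divX, zero_add] at hg₂
  simp only [map_pow] at h₁
  have hg : C (γ ^ 2) * g = 0 := by
    rw [map_pow]
    linear_combination X ^ 2 * h₁ - C γ * h₂ - C γ ^ 2 * X * hg₂ - C γ ^ 2 * hg₁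
  rw [mul_eq_zero, C_eq_zero] at hg
  obtain rfl := hg.resolve_left (pow_ne_zero 2 hγ)
  simpa [X_ne_zero] using h₂

end Intertwiners

theorem bif_tri_r_rp3 (r : ℕ) (hr : 1 ≤ r) (β γ : ℂ) (hβγ : (β, γ) ≠ (0, 0)) :
    PairEquiv
      (place 0 0 (MatF r) + place r (r - 1) (MatF (r + 3)) :
        Matrix (Fin (2 * r + 3)) (Fin (2 * r + 1)) ℂ)
      (place 0 0 (MatK r) + place r (r - 1) (MatK (r + 3)) + β • Estd 1 r + γ • Estd 1 (r + 1))
      (place 0 0 (MatF (r + 1)) + place (r + 1) r (MatF (r + 2)))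
      (place 0 0 (MatK (r + 1)) + place (r + 1) r (MatK (r + 2))) := by
  by_cases hβ : β = 0
  · subst hβ
    have hγ : γ ≠ 0 := fun hγ => hβγ (by rw [hγ])
    exact pairEquiv_of_intertwiner r hr 0 γ (intertwinerGamma γ)
      (intertwinerGamma_mem_prod_degreeLT γ) (intertwinerGamma_injective hγ)
      (intertwinerGamma_perturbedShift γ)
  · exact pairEquiv_of_intertwiner r hr β γ (intertwinerBeta β γ)
      (intertwinerBeta_mem_prod_degreeLT β γ) (intertwinerBeta_injective hβ γ)
      (intertwinerBeta_perturbedShift β γ)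
end
end

section
/- Let r ≥ 1 and let β, γ be complex numbers with (β, γ) ≠ (0, 0). Then the pair of (3r+4)×(3r+2) complex matrices (F_r ⊕ F_{r+2} ⊕ F_{r+2}, (K_r ⊕ K_{r+2} ⊕ K_{r+2}) + β·E_{1,r} + γ·E_{1,2r+1}) is equivalent to the pair (F_{r+1} ⊕ F_{r+1} ⊕ F_{r+2}, K_{r+1} ⊕ K_{r+1} ⊕ K_{r+2}). -/
open Matrix

noncomputable section

/-!
Read `(F_n, K_n)` as the pair (inclusion, multiplication by `x`) from polynomials of degree
`< n - 1` to polynomials of degree `< n`. A morphism from `(F_{n+1}, K_{n+1})` to a pair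
`(A₁, A₂)` is a chain of columns `v₀, …, v_{n-1}` with `A₂ vₖ = A₁ vₖ₊₁`.

Choose `b, g` with `β b + γ g = 1`. Write a column of the perturbed pair as a triple of
polynomials `(p, q, s)`, so that `A₂ (p, q, s) = (x p + β q(0) + γ s(0), x q, x s)`. Then
  `(x^(k-1), b x^k, g x^k)` for `k < r` (with `x^(-1) = 0`),
  `(0, b x^(k+1), g x^(k+1))` for `k < r`,
  `(0, -γ x^k, β x^k)` for `k ≤ r`
are three chains, of lengths `r`, `r`, `r + 1` (the perturbation is what turns the constant
`b β + g γ` of the first one into `x^0`), and together they form a basis. They are the columns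
of `S`; the columns of `T` are their images under `A₁`, and under `A₂` at the end of each chain.
Hence `T B₁ = A₁ S` and `T B₂ = A₂ S`, and `S`, `T` are invertible, with inverses computed from
`[[b, -γ], [g, β]]⁻¹ = [[β, γ], [-g, b]]`. The last column of all four matrices is zero;
`S` fixes it.
-/

lemma place_MatF_apply {M N : ℕ} (ri ci m : ℕ) (i : Fin M) (j : Fin N) :
    (place ri ci (MatF m) : Matrix (Fin M) (Fin N) ℂ) i j =
      if ci ≤ (j : ℕ) ∧ (j : ℕ) + 1 < ci + m ∧ (i : ℕ) + ci = j + ri then 1 else 0 := by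
  simp only [place, MatF]
  split_ifs <;> first | rfl | (exfalso; omega)

lemma place_MatK_apply {M N : ℕ} (ri ci m : ℕ) (i : Fin M) (j : Fin N) :
    (place ri ci (MatK m) : Matrix (Fin M) (Fin N) ℂ) i j =
      if ci ≤ (j : ℕ) ∧ (j : ℕ) + 1 < ci + m ∧ (i : ℕ) + ci = j + ri + 1 then 1 else 0 := by
  simp only [place, MatK]
  split_ifs <;> first | rfl | (exfalso; omega)

lemma PairEquiv.of_mul_eq {m n : ℕ} {A₁ A₂ B₁ B₂ : Matrix (Fin m) (Fin n) ℂ}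
    {T : Matrix (Fin m) (Fin m) ℂ} {S : Matrix (Fin n) (Fin n) ℂ} (hT : IsUnit T) (hS : IsUnit S)
    (h₁ : T * B₁ = A₁ * S) (h₂ : T * B₂ = A₂ * S) : PairEquiv A₁ A₂ B₁ B₂ := by
  have hT' : IsUnit T.det := (isUnit_iff_isUnit_det T).mp hT
  refine ⟨T⁻¹, S, isUnit_nonsing_inv_iff.mpr hT, hS, ?_, ?_⟩
  · rw [Matrix.mul_assoc, ← h₁, ← Matrix.mul_assoc, nonsing_inv_mul _ hT', Matrix.one_mul]
  · rw [Matrix.mul_assoc, ← h₂, ← Matrix.mul_assoc, nonsing_inv_mul _ hT', Matrix.one_mul]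

lemma exists_mul_add_mul_eq_one {K : Type*} [Field K] {β γ : K} (h : (β, γ) ≠ (0, 0)) :
    ∃ b g : K, β * b + γ * g = 1 := by
  by_cases hβ : β = 0
  · have hγ : γ ≠ 0 := fun hγ => h (by rw [hβ, hγ])
    exact ⟨0, γ⁻¹, by simp [hγ]⟩
  · exact ⟨β⁻¹, 0, by simp [hβ]⟩

section Semiring

variable {R : Type*} [NonUnitalNonAssocSemiring R]

lemma Fin.sum_mul_ite_val_eq {n : ℕ} (f : ℕ → R) (a : ℕ) (c : R) (h : n ≤ a → f a = 0) :
    ∑ k : Fin n, f k * (if (k : ℕ) = a then c else 0) = f a * c := by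
  rw [Fin.sum_univ_eq_sum_range (fun k => f k * if k = a then c else 0)]
  simp only [mul_ite, mul_zero, Finset.sum_ite_eq', Finset.mem_range]
  split_ifs with ha
  · rfl
  · rw [h (not_lt.mp ha), zero_mul]

lemma Fin.sum_ite_val_mul_eq {n : ℕ} (f : ℕ → R) (a : ℕ) (c : R) (h : n ≤ a → f a = 0) :
    ∑ k : Fin n, (if (k : ℕ) = a then c else 0) * f k = c * f a := by
  rw [Fin.sum_univ_eq_sum_range (fun k => (if k = a then c else 0) * f k)]
  simp only [ite_mul, zero_mul, Finset.sum_ite_eq', Finset.mem_range]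
  split_ifs with ha
  · rfl
  · rw [h (not_lt.mp ha), mul_zero]

def twoEntryCols (n : ℕ) (rows : ℕ → ℕ × ℕ) (coeffs : ℕ → R × R) : Matrix (Fin n) (Fin n) R :=
  of fun k j => (if (k : ℕ) = (rows j).1 then (coeffs j).1 else 0) +
    (if (k : ℕ) = (rows j).2 then (coeffs j).2 else 0)

lemma of_mul_twoEntryCols_apply {n : ℕ} (f : ℕ → ℕ → R) (rows : ℕ → ℕ × ℕ)
    (coeffs : ℕ → R × R) (i j : Fin n) (h₁ : (rows j).1 < n) (h₂ : (rows j).2 < n) :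
    (of (fun i k : Fin n => f i k) * twoEntryCols n rows coeffs) i j =
      f i (rows j).1 * (coeffs j).1 + f i (rows j).2 * (coeffs j).2 := by
  simp only [mul_apply, of_apply, twoEntryCols, mul_add, Finset.sum_add_distrib]
  rw [Fin.sum_mul_ite_val_eq (f i) _ _ (fun h => absurd h₁ (not_lt.mpr h)),
    Fin.sum_mul_ite_val_eq (f i) _ _ (fun h => absurd h₂ (not_lt.mpr h))]

end Semiring

namespace BifTri

section Definitions

variable (r : ℕ) (β γ b g : ℂ)

def A₁ : Matrix (Fin (3 * r + 4)) (Fin (3 * r + 2)) ℂ :=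
  place 0 0 (MatF r) + place r (r - 1) (MatF (r + 2)) + place (2 * r + 2) (2 * r) (MatF (r + 2))

def A₂ : Matrix (Fin (3 * r + 4)) (Fin (3 * r + 2)) ℂ :=
  place 0 0 (MatK r) + place r (r - 1) (MatK (r + 2)) + place (2 * r + 2) (2 * r) (MatK (r + 2))
    + β • Estd 1 r + γ • Estd 1 (2 * r + 1)

def B₁ : Matrix (Fin (3 * r + 4)) (Fin (3 * r + 2)) ℂ :=
  place 0 0 (MatF (r + 1)) + place (r + 1) r (MatF (r + 1))
    + place (2 * r + 2) (2 * r) (MatF (r + 2))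

def B₂ : Matrix (Fin (3 * r + 4)) (Fin (3 * r + 2)) ℂ :=
  place 0 0 (MatK (r + 1)) + place (r + 1) r (MatK (r + 1))
    + place (2 * r + 2) (2 * r) (MatK (r + 2))

/-- The out-of-range value `3 r + 2` marks a zero row of `A₁`. -/
def colA (i : ℕ) : ℕ :=
  if i + 1 < r then i else if i + 1 = r then 3 * r + 2 else if i ≤ 2 * r then i - 1
  else if i = 2 * r + 1 then 3 * r + 2 else if i ≤ 3 * r + 2 then i - 2 else 3 * r + 2

/-- The out-of-range value `3 r + 4` marks a zero column of `B₁`. -/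
def rowB (j : ℕ) : ℕ :=
  if j < r then j else if j < 2 * r then j + 1 else if j ≤ 3 * r then j + 2 else 3 * r + 4

/-- Columns `k`, `r + k`, `2 r + k` are the `k`-th vectors of the three chains; the polynomial
blocks `p`, `q`, `s` start in rows `0`, `r - 1`, `2 r`. -/
def chainS (i j : ℕ) : ℂ :=
  if j < r then (if i + 1 = j then 1 else 0) + (if i = r - 1 + j then b else 0)
      + (if i = 2 * r + j then g else 0)
  else if j < 2 * r then (if i = j then b else 0) + (if i = r + 1 + j then g else 0)
  else if j ≤ 3 * r then (if i + r + 1 = j then -γ else 0) + (if i = j then β else 0)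
  else if i = j then 1 else 0

/-- Columns `k`, `r + 1 + k`, `2 r + 2 + k` come from the three chains; the polynomial blocks
start in rows `0`, `r`, `2 r + 2`. -/
def chainT (i j : ℕ) : ℂ :=
  if j ≤ r then (if i + 1 = j then 1 else 0) + (if i = r + j then b else 0)
      + (if i = 2 * r + 2 + j then g else 0)
  else if j ≤ 2 * r + 1 then (if i = j then b else 0) + (if i = r + 2 + j then g else 0)
  else if j ≤ 3 * r + 3 then (if i + r + 2 = j then -γ else 0) + (if i = j then β else 0)
  else 0

def S : Matrix (Fin (3 * r + 2)) (Fin (3 * r + 2)) ℂ := of fun i j => chainS r β γ b g i j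

def T : Matrix (Fin (3 * r + 4)) (Fin (3 * r + 4)) ℂ := of fun i j => chainT r β γ b g i j

def chainSInvRows (j : ℕ) : ℕ × ℕ :=
  if j + 1 < r then (j + 1, r + j) else if j + 1 = r then (0, 2 * r)
  else if j < 2 * r then (j, r + 1 + j) else if j = 2 * r then (0, 2 * r)
  else if j ≤ 3 * r then (j - (r + 1), j) else (j, j)

def chainSInvCoeffs (j : ℕ) : ℂ × ℂ :=
  if j + 1 < r then (1, -1) else if j < 2 * r then (β, -g) else if j ≤ 3 * r then (γ, b)
  else (1, 0)

def chainTInvRows (j : ℕ) : ℕ × ℕ :=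
  if j < r then (j + 1, r + 1 + j) else if j = r then (0, 2 * r + 2)
  else if j ≤ 2 * r + 1 then (j, r + 2 + j) else if j = 2 * r + 2 then (0, 2 * r + 2)
  else (j - (r + 2), j)

def chainTInvCoeffs (j : ℕ) : ℂ × ℂ :=
  if j < r then (1, -1) else if j ≤ 2 * r + 1 then (β, -g) else (γ, b)

end Definitions

variable {r : ℕ}

lemma A₁_apply (i : Fin (3 * r + 4)) (k : Fin (3 * r + 2)) :
    A₁ r i k = if (k : ℕ) = colA r i then 1 else 0 := by
  have := i.isLt; have := k.isLt
  simp only [A₁, Matrix.add_apply, place_MatF_apply, colA]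
  repeat' (first | (exfalso; omega) | split)
  all_goals simp only [add_zero, zero_add]

lemma A₂_apply (hr : 1 ≤ r) (β γ : ℂ) (i : Fin (3 * r + 4)) (k : Fin (3 * r + 2)) :
    A₂ r β γ i k =
      if (i : ℕ) = 0 then (if (k : ℕ) = r - 1 then β else 0) + (if (k : ℕ) = 2 * r then γ else 0)
      else if (k : ℕ) = colA r (i - 1) then 1 else 0 := by
  have := i.isLt; have := k.isLt
  simp only [A₂, Matrix.add_apply, Matrix.smul_apply, smul_eq_mul, place_MatK_apply, Estd, colA]
  repeat' (first | (exfalso; omega) | split)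
  all_goals simp only [add_zero, zero_add, mul_zero, mul_one]

lemma B₁_apply (k : Fin (3 * r + 4)) (j : Fin (3 * r + 2)) :
    B₁ r k j = if (k : ℕ) = rowB r j then 1 else 0 := by
  have := k.isLt; have := j.isLt
  simp only [B₁, Matrix.add_apply, place_MatF_apply, rowB]
  repeat' (first | (exfalso; omega) | split)
  all_goals simp only [add_zero, zero_add]

lemma B₂_apply (k : Fin (3 * r + 4)) (j : Fin (3 * r + 2)) :
    B₂ r k j = if (k : ℕ) = rowB r j + 1 then 1 else 0 := by
  have := k.isLt; have := j.isLt
  simp only [B₂, Matrix.add_apply, place_MatK_apply, rowB]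
  repeat' (first | (exfalso; omega) | split)
  all_goals simp only [add_zero, zero_add]

variable (β γ b g : ℂ)

lemma chainS_eq_zero_of_le {k : ℕ} (j : ℕ) (hk : 3 * r + 2 ≤ k) (hj : j < 3 * r + 2) :
    chainS r β γ b g k j = 0 := by
  simp only [chainS]
  split_ifs <;> first | (exfalso; omega) | simp

lemma chainT_eq_zero_of_le (i : ℕ) {k : ℕ} (hk : 3 * r + 4 ≤ k) : chainT r β γ b g i k = 0 := by
  simp only [chainT]
  split_ifs <;> first | rfl | (exfalso; omega)

lemma chainSInvRows_lt {j : ℕ} (hj : j < 3 * r + 2) :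
    (chainSInvRows r j).1 < 3 * r + 2 ∧ (chainSInvRows r j).2 < 3 * r + 2 := by
  unfold chainSInvRows; split_ifs <;> constructor <;> omega

lemma chainTInvRows_lt {j : ℕ} (hj : j < 3 * r + 4) :
    (chainTInvRows r j).1 < 3 * r + 4 ∧ (chainTInvRows r j).2 < 3 * r + 4 := by
  unfold chainTInvRows; split_ifs <;> constructor <;> omega

lemma chainT_rowB (hr : 1 ≤ r) (i j : ℕ) (hi : i < 3 * r + 4) (hj : j < 3 * r + 2) :
    chainT r β γ b g i (rowB r j) = chainS r β γ b g (colA r i) j := by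
  unfold rowB colA
  split_ifs <;> simp only [chainT, chainS] <;> repeat' (first | (exfalso; omega) | split)
  all_goals linear_combination

lemma chainT_rowB_succ (hr : 1 ≤ r) (i j : ℕ) (hi0 : 1 ≤ i) (hi : i < 3 * r + 4)
    (hj : j < 3 * r + 2) :
    chainT r β γ b g i (rowB r j + 1) = chainS r β γ b g (colA r (i - 1)) j := by
  unfold rowB colA
  split_ifs <;> simp only [chainT, chainS] <;> repeat' (first | (exfalso; omega) | split)
  all_goals linear_combination

lemma chainT_zero_rowB_succ (hr : 1 ≤ r) (hbg : β * b + γ * g = 1) (j : ℕ)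
    (hj : j < 3 * r + 2) :
    chainT r β γ b g 0 (rowB r j + 1) =
      β * chainS r β γ b g (r - 1) j + γ * chainS r β γ b g (2 * r) j := by
  unfold rowB
  split_ifs <;> simp only [chainT, chainS] <;> repeat' (first | (exfalso; omega) | split)
  all_goals first | linear_combination | linear_combination hbg | linear_combination -hbg

lemma chainS_chainSInv (hr : 1 ≤ r) (hbg : β * b + γ * g = 1) (i j : ℕ)
    (hi : i < 3 * r + 2) (hj : j < 3 * r + 2) :
    chainS r β γ b g i (chainSInvRows r j).1 * (chainSInvCoeffs r β γ b g j).1 +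
      chainS r β γ b g i (chainSInvRows r j).2 * (chainSInvCoeffs r β γ b g j).2 =
      if i = j then 1 else 0 := by
  simp only [chainSInvRows, chainSInvCoeffs]
  split_ifs <;> simp only [chainS] <;> repeat' (first | (exfalso; omega) | split)
  all_goals first | linear_combination | linear_combination hbg

lemma chainT_chainTInv (hbg : β * b + γ * g = 1) (i j : ℕ) (hi : i < 3 * r + 4)
    (hj : j < 3 * r + 4) :
    chainT r β γ b g i (chainTInvRows r j).1 * (chainTInvCoeffs r β γ b g j).1 +
      chainT r β γ b g i (chainTInvRows r j).2 * (chainTInvCoeffs r β γ b g j).2 =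
      if i = j then 1 else 0 := by
  simp only [chainTInvRows, chainTInvCoeffs]
  split_ifs <;> simp only [chainT] <;> repeat' (first | (exfalso; omega) | split)
  all_goals first | linear_combination | linear_combination hbg

lemma S_mul_twoEntryCols (hr : 1 ≤ r) (hbg : β * b + γ * g = 1) :
    S r β γ b g * twoEntryCols (3 * r + 2) (chainSInvRows r) (chainSInvCoeffs r β γ b g) = 1 := by
  ext i j
  obtain ⟨h₁, h₂⟩ := chainSInvRows_lt j.isLt
  rw [S, of_mul_twoEntryCols_apply _ _ _ i j h₁ h₂,
    chainS_chainSInv β γ b g hr hbg _ _ i.isLt j.isLt, one_apply]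
  simp only [Fin.val_inj]

lemma T_mul_twoEntryCols (hbg : β * b + γ * g = 1) :
    T r β γ b g * twoEntryCols (3 * r + 4) (chainTInvRows r) (chainTInvCoeffs r β γ b g) = 1 := by
  ext i j
  obtain ⟨h₁, h₂⟩ := chainTInvRows_lt j.isLt
  rw [T, of_mul_twoEntryCols_apply _ _ _ i j h₁ h₂,
    chainT_chainTInv β γ b g hbg _ _ i.isLt j.isLt, one_apply]
  simp only [Fin.val_inj]

lemma T_mul_B₁ (hr : 1 ≤ r) : T r β γ b g * B₁ r = A₁ r * S r β γ b g := by
  ext i j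
  simp only [mul_apply, T, S, of_apply, B₁_apply, A₁_apply]
  rw [Fin.sum_mul_ite_val_eq (chainT r β γ b g i) _ _ (chainT_eq_zero_of_le β γ b g i),
    Fin.sum_ite_val_mul_eq (chainS r β γ b g · j) _ _
      (fun h => chainS_eq_zero_of_le β γ b g j h j.isLt),
    mul_one, one_mul, chainT_rowB β γ b g hr i j i.isLt j.isLt]

lemma T_mul_B₂ (hr : 1 ≤ r) (hbg : β * b + γ * g = 1) :
    T r β γ b g * B₂ r = A₂ r β γ * S r β γ b g := by
  ext i j
  simp only [mul_apply, T, S, of_apply, B₂_apply, A₂_apply hr]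
  rw [Fin.sum_mul_ite_val_eq (chainT r β γ b g i) _ _
      (fun h => chainT_eq_zero_of_le β γ b g i (by omega)), mul_one]
  by_cases hi : (i : ℕ) = 0
  · simp only [hi, if_true, add_mul, Finset.sum_add_distrib]
    rw [Fin.sum_ite_val_mul_eq (chainS r β γ b g · j) _ _ (fun h => by omega),
      Fin.sum_ite_val_mul_eq (chainS r β γ b g · j) _ _ (fun h => by omega)]
    exact chainT_zero_rowB_succ β γ b g hr hbg j j.isLt
  · simp only [hi, if_false]
    rw [Fin.sum_ite_val_mul_eq (chainS r β γ b g · j) _ _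
        (fun h => chainS_eq_zero_of_le β γ b g j h j.isLt),
      one_mul, chainT_rowB_succ β γ b g hr i j (by omega) i.isLt j.isLt]

end BifTri

open BifTri

theorem bif_tri_r_rp2_rp2 (r : ℕ) (hr : 1 ≤ r) (β γ : ℂ) (hβγ : (β, γ) ≠ (0, 0)) :
    PairEquiv
      (place 0 0 (MatF r) + place r (r - 1) (MatF (r + 2))
          + place (2 * r + 2) (2 * r) (MatF (r + 2)) :
        Matrix (Fin (3 * r + 4)) (Fin (3 * r + 2)) ℂ)
      (place 0 0 (MatK r) + place r (r - 1) (MatK (r + 2))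
          + place (2 * r + 2) (2 * r) (MatK (r + 2))
          + β • Estd 1 r + γ • Estd 1 (2 * r + 1))
      (place 0 0 (MatF (r + 1)) + place (r + 1) r (MatF (r + 1))
          + place (2 * r + 2) (2 * r) (MatF (r + 2)))
      (place 0 0 (MatK (r + 1)) + place (r + 1) r (MatK (r + 1))
          + place (2 * r + 2) (2 * r) (MatK (r + 2))) := by
  obtain ⟨b, g, hbg⟩ := exists_mul_add_mul_eq_one hβγ
  exact PairEquiv.of_mul_eq (.of_mul_eq_one _ (T_mul_twoEntryCols β γ b g hbg))
    (.of_mul_eq_one _ (S_mul_twoEntryCols β γ b g hr hbg)) (T_mul_B₁ β γ b g hr)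
    (T_mul_B₂ β γ b g hr hbg)
end
end

section
/- Let r ≥ 1, let λ be a complex number, and let β, γ be complex numbers with (β, γ) ≠ (0, 0). Then the pair of (2r+1)×(2r−1) complex matrices (F_r ⊕ F_r ⊕ [1], (K_r ⊕ K_r ⊕ [λ]) + β·E_{1,2r−1} + γ·E_{r+1,2r−1}), where [1] and [λ] are 1×1 blocks, is equivalent to the pair (F_r ⊕ F_{r+1}, K_r ⊕ K_{r+1}). -/
open Matrix

noncomputable section

set_option maxHeartbeats 4000000

lemma one_one_apply (x : ℂ) (a b : Fin 1) : !![x] a b = x := by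
  fin_cases a; fin_cases b; simp

lemma B1_apply (r : ℕ) (k : Fin (2*r+1)) (j : Fin (2*r-1)) :
    (place 0 0 (MatF r) + place r (r-1) (MatF (r+1)) : Matrix (Fin (2*r+1)) (Fin (2*r-1)) ℂ) k j
    = if (k:ℕ) = (if (j:ℕ) < r-1 then (j:ℕ) else (j:ℕ)+1) then 1 else 0 := by
  have hk := k.isLt; have hj := j.isLt
  simp only [Matrix.add_apply, place, MatF]
  split_ifs <;> first | ring1 | (exfalso; omega)

lemma B2_apply (r : ℕ) (k : Fin (2*r+1)) (j : Fin (2*r-1)) :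
    (place 0 0 (MatK r) + place r (r-1) (MatK (r+1)) : Matrix (Fin (2*r+1)) (Fin (2*r-1)) ℂ) k j
    = if (k:ℕ) = (if (j:ℕ) < r-1 then (j:ℕ)+1 else (j:ℕ)+2) then 1 else 0 := by
  have hk := k.isLt; have hj := j.isLt
  simp only [Matrix.add_apply, place, MatK]
  split_ifs <;> first | ring1 | (exfalso; omega)

section rows
variable {r : ℕ} (lam β γ : ℂ)

lemma rowF1 (i : Fin (2*r+1)) (h : (i:ℕ) < r-1) (l : Fin (2*r-1)) :
    (place 0 0 (MatF r) : Matrix (Fin (2*r+1)) (Fin (2*r-1)) ℂ) i l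
    = if (l:ℕ) = (i:ℕ) then 1 else 0 := by
  have hj := l.isLt
  simp only [place, MatF]
  split_ifs <;> first | ring1 | (exfalso; omega)

lemma rowF1z (i : Fin (2*r+1)) (h : ¬ (i:ℕ) < r-1) (l : Fin (2*r-1)) :
    (place 0 0 (MatF r) : Matrix (Fin (2*r+1)) (Fin (2*r-1)) ℂ) i l = 0 := by
  have hj := l.isLt
  simp only [place, MatF]
  split_ifs <;> first | ring1 | (exfalso; omega)

lemma rowF2 (i : Fin (2*r+1)) (h : r ≤ (i:ℕ) ∧ (i:ℕ) ≤ 2*r-2) (l : Fin (2*r-1)) :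
    (place r (r-1) (MatF r) : Matrix (Fin (2*r+1)) (Fin (2*r-1)) ℂ) i l
    = if (l:ℕ) = (i:ℕ)-1 then 1 else 0 := by
  have hj := l.isLt
  simp only [place, MatF]
  split_ifs <;> first | ring1 | (exfalso; omega)

lemma rowF2z (i : Fin (2*r+1)) (h : ¬(r ≤ (i:ℕ) ∧ (i:ℕ) ≤ 2*r-2)) (l : Fin (2*r-1)) :
    (place r (r-1) (MatF r) : Matrix (Fin (2*r+1)) (Fin (2*r-1)) ℂ) i l = 0 := by
  have hj := l.isLt
  simp only [place, MatF]
  split_ifs <;> first | ring1 | (exfalso; omega)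

lemma rowOne (i : Fin (2*r+1)) (h : (i:ℕ) = 2*r) (l : Fin (2*r-1)) :
    (place (2*r) (2*r-2) !![(1:ℂ)] : Matrix (Fin (2*r+1)) (Fin (2*r-1)) ℂ) i l
    = if (l:ℕ) = 2*r-2 then 1 else 0 := by
  have hj := l.isLt
  simp only [place, one_one_apply]
  split_ifs <;> first | ring1 | (exfalso; omega)

lemma rowOnez (i : Fin (2*r+1)) (h : ¬(i:ℕ) = 2*r) (l : Fin (2*r-1)) :
    (place (2*r) (2*r-2) !![(1:ℂ)] : Matrix (Fin (2*r+1)) (Fin (2*r-1)) ℂ) i l = 0 := by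
  have hj := l.isLt
  simp only [place, one_one_apply]
  split_ifs <;> first | ring1 | (exfalso; omega)

lemma rowLam (i : Fin (2*r+1)) (h : (i:ℕ) = 2*r) (l : Fin (2*r-1)) :
    (place (2*r) (2*r-2) !![lam] : Matrix (Fin (2*r+1)) (Fin (2*r-1)) ℂ) i l
    = if (l:ℕ) = 2*r-2 then lam else 0 := by
  have hj := l.isLt
  simp only [place, one_one_apply]
  split_ifs <;> first | ring1 | (exfalso; omega)

lemma rowLamz (i : Fin (2*r+1)) (h : ¬(i:ℕ) = 2*r) (l : Fin (2*r-1)) :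
    (place (2*r) (2*r-2) !![lam] : Matrix (Fin (2*r+1)) (Fin (2*r-1)) ℂ) i l = 0 := by
  have hj := l.isLt
  simp only [place, one_one_apply]
  split_ifs <;> first | ring1 | (exfalso; omega)

lemma rowK1 (i : Fin (2*r+1)) (h : 1 ≤ (i:ℕ) ∧ (i:ℕ) < r) (l : Fin (2*r-1)) :
    (place 0 0 (MatK r) : Matrix (Fin (2*r+1)) (Fin (2*r-1)) ℂ) i l
    = if (l:ℕ) = (i:ℕ)-1 then 1 else 0 := by
  have hj := l.isLt
  simp only [place, MatK]
  split_ifs <;> first | ring1 | (exfalso; omega)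

lemma rowK1z (i : Fin (2*r+1)) (h : ¬(1 ≤ (i:ℕ) ∧ (i:ℕ) < r)) (l : Fin (2*r-1)) :
    (place 0 0 (MatK r) : Matrix (Fin (2*r+1)) (Fin (2*r-1)) ℂ) i l = 0 := by
  have hj := l.isLt
  simp only [place, MatK]
  split_ifs <;> first | ring1 | (exfalso; omega)

lemma rowK2 (i : Fin (2*r+1)) (h : r+1 ≤ (i:ℕ) ∧ (i:ℕ) < 2*r) (l : Fin (2*r-1)) :
    (place r (r-1) (MatK r) : Matrix (Fin (2*r+1)) (Fin (2*r-1)) ℂ) i l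
    = if (l:ℕ) = (i:ℕ)-2 then 1 else 0 := by
  have hj := l.isLt
  simp only [place, MatK]
  split_ifs <;> first | ring1 | (exfalso; omega)

lemma rowK2z (i : Fin (2*r+1)) (h : ¬(r+1 ≤ (i:ℕ) ∧ (i:ℕ) < 2*r)) (l : Fin (2*r-1)) :
    (place r (r-1) (MatK r) : Matrix (Fin (2*r+1)) (Fin (2*r-1)) ℂ) i l = 0 := by
  have hj := l.isLt
  simp only [place, MatK]
  split_ifs <;> first | ring1 | (exfalso; omega)

lemma rowE1 (hr : 1 ≤ r) (i : Fin (2*r+1)) (h : (i:ℕ) = 0) (l : Fin (2*r-1)) :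
    (β • Estd 1 (2*r-1) : Matrix (Fin (2*r+1)) (Fin (2*r-1)) ℂ) i l
    = if (l:ℕ) = 2*r-2 then β else 0 := by
  have hj := l.isLt
  simp only [Matrix.smul_apply, Estd, smul_eq_mul]
  split_ifs <;> first | ring1 | (exfalso; omega)

lemma rowE1z (i : Fin (2*r+1)) (h : ¬(i:ℕ) = 0) (l : Fin (2*r-1)) :
    (β • Estd 1 (2*r-1) : Matrix (Fin (2*r+1)) (Fin (2*r-1)) ℂ) i l = 0 := by
  have hj := l.isLt
  simp only [Matrix.smul_apply, Estd, smul_eq_mul]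
  split_ifs <;> first | ring1 | (exfalso; omega)

lemma rowE2 (hr : 1 ≤ r) (i : Fin (2*r+1)) (h : (i:ℕ) = r) (l : Fin (2*r-1)) :
    (γ • Estd (r+1) (2*r-1) : Matrix (Fin (2*r+1)) (Fin (2*r-1)) ℂ) i l
    = if (l:ℕ) = 2*r-2 then γ else 0 := by
  have hj := l.isLt
  simp only [Matrix.smul_apply, Estd, smul_eq_mul]
  split_ifs <;> first | ring1 | (exfalso; omega)

lemma rowE2z (i : Fin (2*r+1)) (h : ¬(i:ℕ) = r) (l : Fin (2*r-1)) :
    (γ • Estd (r+1) (2*r-1) : Matrix (Fin (2*r+1)) (Fin (2*r-1)) ℂ) i l = 0 := by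
  have hj := l.isLt
  simp only [Matrix.smul_apply, Estd, smul_eq_mul]
  split_ifs <;> first | ring1 | (exfalso; omega)

end rows

lemma mul_sum_ite {n : ℕ} (f : Fin n → ℂ) {a : ℕ} (w : ℂ) (ha : a < n) :
    ∑ k : Fin n, f k * (if (k:ℕ) = a then w else 0) = f ⟨a, ha⟩ * w := by
  rw [Finset.sum_eq_single (⟨a, ha⟩ : Fin n)]
  · simp
  · intro b _ hb
    rw [if_neg, mul_zero]
    exact fun h => hb (Fin.ext h)
  · simp

lemma sum_ite_mul {n : ℕ} (f : Fin n → ℂ) {a : ℕ} (w : ℂ) (ha : a < n) :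
    ∑ l : Fin n, (if (l:ℕ) = a then w else 0) * f l = w * f ⟨a, ha⟩ := by
  rw [Finset.sum_eq_single (⟨a, ha⟩ : Fin n)]
  · simp
  · intro b _ hb
    rw [if_neg, zero_mul]
    exact fun h => hb (Fin.ext h)
  · simp

/-- change of basis matrix: columns `< s` are the short-chain columns, columns `≥ s`
the long chain. -/
def Wm (s n : ℕ) (lam β γ μ ν : ℂ) : Matrix (Fin n) (Fin n) ℂ := fun i p =>
  if (p:ℕ) < s then (if (i:ℕ) = (p:ℕ) then μ else if (i:ℕ) = (p:ℕ) + s then ν else 0)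
  else if (i:ℕ) = 2*s then lam^((p:ℕ)-s)
  else if (i:ℕ) + s < (p:ℕ) then β * lam^((p:ℕ)-s-1-(i:ℕ))
  else if s ≤ (i:ℕ) ∧ (i:ℕ) < (p:ℕ) then γ * lam^((p:ℕ)-1-(i:ℕ))
  else 0

/-- inverse of `Wm` -/
def Wi (s n : ℕ) (lam β γ μ ν : ℂ) : Matrix (Fin n) (Fin n) ℂ := fun p i =>
  if (i:ℕ) < s then
    (if (p:ℕ) = (i:ℕ) then γ/(μ*γ-ν*β) else if (p:ℕ) = s+(i:ℕ)+1 then -ν/(μ*γ-ν*β)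
      else if (p:ℕ) = s+(i:ℕ) then ν*lam/(μ*γ-ν*β) else 0)
  else if (i:ℕ) < 2*s then
    (if (p:ℕ) = (i:ℕ)-s then -β/(μ*γ-ν*β) else if (p:ℕ) = (i:ℕ)+1 then μ/(μ*γ-ν*β)
      else if (p:ℕ) = (i:ℕ) then -μ*lam/(μ*γ-ν*β) else 0)
  else if (p:ℕ) = s then 1 else 0

lemma Wm_mul_Wi (s n : ℕ) (hn : n = 2*s+1) (lam β γ μ ν : ℂ) (ht : μ*γ-ν*β ≠ 0) :
    Wm s n lam β γ μ ν * Wi s n lam β γ μ ν = 1 := by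
  ext i i'
  have hi := i.isLt; have hi' := i'.isLt
  rw [mul_apply, one_apply, show (if i = i' then (1:ℂ) else 0)
      = (if (i:ℕ) = (i':ℕ) then 1 else 0) from by simp [Fin.ext_iff]]
  by_cases h1 : (i':ℕ) < s
  · have hcol : ∀ p : Fin n, Wi s n lam β γ μ ν p i' =
        (if (p:ℕ) = (i':ℕ) then γ/(μ*γ-ν*β) else 0)
        + (if (p:ℕ) = s+(i':ℕ)+1 then -ν/(μ*γ-ν*β) else 0)
        + (if (p:ℕ) = s+(i':ℕ) then ν*lam/(μ*γ-ν*β) else 0) := by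
      intro p
      simp only [Wi, if_pos h1]
      split_ifs <;> first | ring1 | (exfalso; omega)
    simp only [hcol, mul_add, Finset.sum_add_distrib]
    rw [mul_sum_ite _ _ (show (i':ℕ) < n by omega),
        mul_sum_ite _ _ (show s+(i':ℕ)+1 < n by omega),
        mul_sum_ite _ _ (show s+(i':ℕ) < n by omega)]
    simp only [Wm]
    split_ifs <;>
      first
        | ring1
        | (exfalso; omega)
        | (rw [show s+(i':ℕ)+1-s-1-(i:ℕ) = 0 from by omega, pow_zero]; field_simp; ring1)
        | (rw [show s+(i':ℕ)+1-1-(i:ℕ) = 0 from by omega, pow_zero]; ring1)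
        | (rw [show s+(i':ℕ)+1-s-1-(i:ℕ) = (s+(i':ℕ)-s-1-(i:ℕ))+1 from by omega, pow_succ]; ring1)
        | (rw [show s+(i':ℕ)+1-1-(i:ℕ) = (s+(i':ℕ)-1-(i:ℕ))+1 from by omega, pow_succ]; ring1)
        | (rw [show s+(i':ℕ)+1-s = ((i':ℕ))+1 from by omega,
               show s+(i':ℕ)-s = (i':ℕ) from by omega, pow_succ]; ring1)
  · by_cases h2 : (i':ℕ) < 2*s
    · have hcol : ∀ p : Fin n, Wi s n lam β γ μ ν p i' =
          (if (p:ℕ) = (i':ℕ)-s then -β/(μ*γ-ν*β) else 0)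
          + (if (p:ℕ) = (i':ℕ)+1 then μ/(μ*γ-ν*β) else 0)
          + (if (p:ℕ) = (i':ℕ) then -μ*lam/(μ*γ-ν*β) else 0) := by
        intro p
        simp only [Wi, if_neg h1, if_pos h2]
        split_ifs <;> first | ring1 | (exfalso; omega)
      simp only [hcol, mul_add, Finset.sum_add_distrib]
      rw [mul_sum_ite _ _ (show (i':ℕ)-s < n by omega),
          mul_sum_ite _ _ (show (i':ℕ)+1 < n by omega),
          mul_sum_ite _ _ (show (i':ℕ) < n by omega)]
      simp only [Wm]
      split_ifs <;>
        first
          | ring1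
          | (exfalso; omega)
          | (rw [show (i':ℕ)+1-s-1-(i:ℕ) = 0 from by omega, pow_zero]; ring1)
          | (rw [show (i':ℕ)+1-1-(i:ℕ) = 0 from by omega, pow_zero]; field_simp; ring1)
          | (rw [show (i':ℕ)+1-s-1-(i:ℕ) = ((i':ℕ)-s-1-(i:ℕ))+1 from by omega, pow_succ]; ring1)
          | (rw [show (i':ℕ)+1-1-(i:ℕ) = ((i':ℕ)-1-(i:ℕ))+1 from by omega, pow_succ]; ring1)
          | (rw [show (i':ℕ)+1-s = ((i':ℕ)-s)+1 from by omega, pow_succ]; ring1)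
    · have hcol : ∀ p : Fin n, Wi s n lam β γ μ ν p i' =
          (if (p:ℕ) = s then 1 else 0) := by
        intro p
        simp only [Wi, if_neg h1, if_neg h2]
      simp only [hcol]
      rw [mul_sum_ite _ _ (show s < n by omega)]
      simp only [Wm]
      split_ifs <;>
        first
          | ring1
          | (exfalso; omega)
          | (rw [show s-s = 0 from by omega, pow_zero]; ring1)

lemma key1 (r : ℕ) (hr : 1 ≤ r) (lam β γ μ ν : ℂ) :
    Wm r (2*r+1) lam β γ μ ν *
      ((place 0 0 (MatF r) + place r (r-1) (MatF (r+1))) : Matrix (Fin (2*r+1)) (Fin (2*r-1)) ℂ)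
    = ((place 0 0 (MatF r) + place r (r-1) (MatF r)
        + place (2*r) (2*r-2) !![(1:ℂ)]) : Matrix (Fin (2*r+1)) (Fin (2*r-1)) ℂ)
      * Wm (r-1) (2*r-1) lam β γ μ ν := by
  ext i j
  have hi := i.isLt; have hj := j.isLt
  rw [mul_apply, mul_apply]
  have hred : ∀ σ : ℕ, ∀ hσ : σ < 2*r+1, (∀ k : Fin (2*r+1),
        (place 0 0 (MatF r) + place r (r-1) (MatF (r+1)) : Matrix (Fin (2*r+1)) (Fin (2*r-1)) ℂ) k j
        = if (k:ℕ) = σ then 1 else 0) →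
      ∑ k : Fin (2*r+1), Wm r (2*r+1) lam β γ μ ν i k *
        (place 0 0 (MatF r) + place r (r-1) (MatF (r+1)) : Matrix (Fin (2*r+1)) (Fin (2*r-1)) ℂ) k j
      = Wm r (2*r+1) lam β γ μ ν i ⟨σ, by omega⟩ * 1 := by
    intro σ hσ hB
    simp only [hB]
    rw [mul_sum_ite _ _ hσ]
  by_cases hj1 : (j:ℕ) < r-1 <;>
    [ rw [hred (j:ℕ) (by omega) (by intro k; rw [B1_apply r k j, if_pos hj1])];
      rw [hred ((j:ℕ)+1) (by omega) (by intro k; rw [B1_apply r k j, if_neg hj1])] ] <;>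
  rcases (show (i:ℕ) < r-1 ∨ (i:ℕ) = r-1 ∨ (r ≤ (i:ℕ) ∧ (i:ℕ) ≤ 2*r-2) ∨ (i:ℕ) = 2*r-1
      ∨ (i:ℕ) = 2*r from by omega) with h|h|h|h|h <;>
  (first
    | (simp only [Matrix.add_apply, rowF1 i (by omega), rowF2z i (by omega), rowOnez i (by omega),
          add_zero];
       rw [sum_ite_mul _ _ (show (i:ℕ) < 2*r-1 by omega)])
    | (simp only [Matrix.add_apply, rowF1z i (by omega), rowF2 i (by omega), rowOnez i (by omega),
          zero_add, add_zero];
       rw [sum_ite_mul _ _ (show (i:ℕ)-1 < 2*r-1 by omega)])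
    | (simp only [Matrix.add_apply, rowF1z i (by omega), rowF2z i (by omega), rowOne i (by omega),
          zero_add];
       rw [sum_ite_mul _ _ (show 2*r-2 < 2*r-1 by omega)])
    | (simp only [Matrix.add_apply, rowF1z i (by omega), rowF2z i (by omega), rowOnez i (by omega),
          add_zero, zero_mul, Finset.sum_const_zero])) <;>
  simp only [Wm] <;>
  split_ifs <;>
    first
      | ring1
      | (exfalso; omega)
      | (rw [show (j:ℕ)+1-r-1-(i:ℕ) = (j:ℕ)-(r-1)-1-(i:ℕ) from by omega]; ring1)
      | (rw [show (j:ℕ)+1-1-(i:ℕ) = (j:ℕ)-1-((i:ℕ)-1) from by omega]; ring1)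
      | (rw [show (j:ℕ)+1-r = (j:ℕ)-(r-1) from by omega]; ring1)

lemma key2 (r : ℕ) (hr : 1 ≤ r) (lam β γ μ ν : ℂ) :
    Wm r (2*r+1) lam β γ μ ν *
      ((place 0 0 (MatK r) + place r (r-1) (MatK (r+1))) : Matrix (Fin (2*r+1)) (Fin (2*r-1)) ℂ)
    = ((place 0 0 (MatK r) + place r (r-1) (MatK r)
        + place (2*r) (2*r-2) !![lam]
        + β • Estd 1 (2*r-1) + γ • Estd (r+1) (2*r-1)) : Matrix (Fin (2*r+1)) (Fin (2*r-1)) ℂ)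
      * Wm (r-1) (2*r-1) lam β γ μ ν := by
  ext i j
  have hi := i.isLt; have hj := j.isLt
  rw [mul_apply, mul_apply]
  have hred : ∀ σ : ℕ, ∀ hσ : σ < 2*r+1, (∀ k : Fin (2*r+1),
        (place 0 0 (MatK r) + place r (r-1) (MatK (r+1)) : Matrix (Fin (2*r+1)) (Fin (2*r-1)) ℂ) k j
        = if (k:ℕ) = σ then 1 else 0) →
      ∑ k : Fin (2*r+1), Wm r (2*r+1) lam β γ μ ν i k *
        (place 0 0 (MatK r) + place r (r-1) (MatK (r+1)) : Matrix (Fin (2*r+1)) (Fin (2*r-1)) ℂ) k j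
      = Wm r (2*r+1) lam β γ μ ν i ⟨σ, by omega⟩ * 1 := by
    intro σ hσ hB
    simp only [hB]
    rw [mul_sum_ite _ _ hσ]
  by_cases hj1 : (j:ℕ) < r-1 <;>
    [ rw [hred ((j:ℕ)+1) (by omega) (by intro k; rw [B2_apply r k j, if_pos hj1])];
      rw [hred ((j:ℕ)+2) (by omega) (by intro k; rw [B2_apply r k j, if_neg hj1])] ] <;>
  rcases (show (i:ℕ) = 0 ∨ (1 ≤ (i:ℕ) ∧ (i:ℕ) < r) ∨ (i:ℕ) = r
      ∨ (r+1 ≤ (i:ℕ) ∧ (i:ℕ) < 2*r) ∨ (i:ℕ) = 2*r from by omega) with h|h|h|h|h <;>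
  (first
    | (simp only [Matrix.add_apply, rowK1z i (by omega), rowK2z i (by omega),
          rowLamz lam i (by omega), rowE1 β hr i (by omega), rowE2z γ i (by omega),
          zero_add, add_zero];
       rw [sum_ite_mul _ _ (show 2*r-2 < 2*r-1 by omega)])
    | (simp only [Matrix.add_apply, rowK1 i (by omega), rowK2z i (by omega),
          rowLamz lam i (by omega), rowE1z β i (by omega), rowE2z γ i (by omega),
          zero_add, add_zero];
       rw [sum_ite_mul _ _ (show (i:ℕ)-1 < 2*r-1 by omega)])
    | (simp only [Matrix.add_apply, rowK1z i (by omega), rowK2z i (by omega),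
          rowLamz lam i (by omega), rowE1z β i (by omega), rowE2 γ hr i (by omega),
          zero_add, add_zero];
       rw [sum_ite_mul _ _ (show 2*r-2 < 2*r-1 by omega)])
    | (simp only [Matrix.add_apply, rowK1z i (by omega), rowK2 i (by omega),
          rowLamz lam i (by omega), rowE1z β i (by omega), rowE2z γ i (by omega),
          zero_add, add_zero];
       rw [sum_ite_mul _ _ (show (i:ℕ)-2 < 2*r-1 by omega)])
    | (simp only [Matrix.add_apply, rowK1z i (by omega), rowK2z i (by omega),
          rowLam lam i (by omega), rowE1z β i (by omega), rowE2z γ i (by omega),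
          zero_add, add_zero];
       rw [sum_ite_mul _ _ (show 2*r-2 < 2*r-1 by omega)])) <;>
  simp only [Wm] <;>
  split_ifs <;>
    first
      | ring1
      | (exfalso; omega)
      | (rw [show (j:ℕ)+2-r-1-(i:ℕ) = (j:ℕ)-(r-1) from by omega]; ring1)
      | (rw [show (j:ℕ)+2-r-1-(i:ℕ) = (j:ℕ)-(r-1)-1-((i:ℕ)-1) from by omega]; ring1)
      | (rw [show (j:ℕ)+2-1-(i:ℕ) = (j:ℕ)-(r-1) from by omega]; ring1)
      | (rw [show (j:ℕ)+2-1-(i:ℕ) = (j:ℕ)-1-((i:ℕ)-2) from by omega]; ring1)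
      | (rw [show (j:ℕ)+2-r = ((j:ℕ)-(r-1))+1 from by omega, pow_succ]; ring1)

lemma main_lemma (r : ℕ) (hr : 1 ≤ r) (lam β γ μ ν : ℂ) (ht : μ*γ - ν*β ≠ 0) :
    PairEquiv
      (place 0 0 (MatF r) + place r (r - 1) (MatF r)
          + place (2 * r) (2 * r - 2) !![(1 : ℂ)] :
        Matrix (Fin (2 * r + 1)) (Fin (2 * r - 1)) ℂ)
      (place 0 0 (MatK r) + place r (r - 1) (MatK r)
          + place (2 * r) (2 * r - 2) !![lam]
          + β • Estd 1 (2 * r - 1) + γ • Estd (r + 1) (2 * r - 1))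
      (place 0 0 (MatF r) + place r (r - 1) (MatF (r + 1)))
      (place 0 0 (MatK r) + place r (r - 1) (MatK (r + 1))) := by
  have hW1 : Wm r (2*r+1) lam β γ μ ν * Wi r (2*r+1) lam β γ μ ν = 1 :=
    Wm_mul_Wi r (2*r+1) rfl lam β γ μ ν ht
  have hW2 : Wm (r-1) (2*r-1) lam β γ μ ν * Wi (r-1) (2*r-1) lam β γ μ ν = 1 :=
    Wm_mul_Wi (r-1) (2*r-1) (by omega) lam β γ μ ν ht
  have hWi1 : Wi r (2*r+1) lam β γ μ ν * Wm r (2*r+1) lam β γ μ ν = 1 :=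
    mul_eq_one_comm.mp hW1
  have hu1 : IsUnit (Wi r (2*r+1) lam β γ μ ν) := by
    have := invertibleOfRightInverse _ _ hWi1
    exact isUnit_of_invertible _
  have hu2 : IsUnit (Wm (r-1) (2*r-1) lam β γ μ ν) := by
    have := invertibleOfRightInverse _ _ hW2
    exact isUnit_of_invertible _
  refine ⟨Wi r (2*r+1) lam β γ μ ν, Wm (r-1) (2*r-1) lam β γ μ ν, hu1, hu2, ?_, ?_⟩
  · rw [Matrix.mul_assoc, ← key1 r hr lam β γ μ ν, ← Matrix.mul_assoc, hWi1, Matrix.one_mul]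
  · rw [Matrix.mul_assoc, ← key2 r hr lam β γ μ ν, ← Matrix.mul_assoc, hWi1, Matrix.one_mul]

theorem bif_tri_r_r_lambda (r : ℕ) (hr : 1 ≤ r) (lam β γ : ℂ) (hβγ : (β, γ) ≠ (0, 0)) :
    PairEquiv
      (place 0 0 (MatF r) + place r (r - 1) (MatF r)
          + place (2 * r) (2 * r - 2) !![(1 : ℂ)] :
        Matrix (Fin (2 * r + 1)) (Fin (2 * r - 1)) ℂ)
      (place 0 0 (MatK r) + place r (r - 1) (MatK r)
          + place (2 * r) (2 * r - 2) !![lam]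
          + β • Estd 1 (2 * r - 1) + γ • Estd (r + 1) (2 * r - 1))
      (place 0 0 (MatF r) + place r (r - 1) (MatF (r + 1)))
      (place 0 0 (MatK r) + place r (r - 1) (MatK (r + 1))) := by
  by_cases hγ : γ = 0
  · have hβ : β ≠ 0 := by
      intro hb
      exact hβγ (by rw [hb, hγ])
    exact main_lemma r hr lam β γ 0 (-1) (by simpa using hβ)
  · exact main_lemma r hr lam β γ 1 0 (by simpa using hγ)
end
end
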